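/- arXiv:1801.05652 — 11 statements merged into one kernel-verified Lean document; each statement's English description precedes it below -/
import Mathlib

section
/- Let x·y be a post-Lie algebra structure on (g,n). Then for all x,y ∈ V: [R(x),ad(y)] + [ad(x),R(y)] = [L(x),ad(y)] + [ad(x),L(y)] + [Ad(x),ad(y)] + [ad(x),Ad(y)] − 2[ad(x),ad(y)], where the outer brackets are operator commutators. -/
/-- For a post-Lie algebra structure on `(g,n)`:
`[R(x),ad(y)] + [ad(x),R(y)] = [L(x),ad(y)] + [ad(x),L(y)] + [Ad(x),ad(y)] + [ad(x),Ad(y)]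
  − 2[ad(x),ad(y)]` for all `x,y`, where `R(x)y = y·x`. -/
theorem stmt3 {K V : Type*} [Field K] [CharZero K] [AddCommGroup V] [Module K V]
    (g n : V →ₗ[K] V →ₗ[K] V)
    (hga : ∀ x, g x x = 0)
    (hgj : ∀ x y z, g (g x y) z + g (g y z) x + g (g z x) y = 0)
    (hna : ∀ x, n x x = 0)
    (hnj : ∀ x y z, n (n x y) z + n (n y z) x + n (n z x) y = 0)
    (mul : V →ₗ[K] V →ₗ[K] V)
    (hp1 : ∀ x y, mul x y - mul y x = g x y - n x y)
    (hp2 : ∀ x y z, mul (g x y) z = mul x (mul y z) - mul y (mul x z))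
    (hp3 : ∀ x y z, mul x (n y z) = n (mul x y) z + n y (mul x z)) :
    ∀ x y : V,
      (mul.flip x ∘ₗ g y - g y ∘ₗ mul.flip x) + (g x ∘ₗ mul.flip y - mul.flip y ∘ₗ g x)
        = (mul x ∘ₗ g y - g y ∘ₗ mul x) + (g x ∘ₗ mul y - mul y ∘ₗ g x)
          + (n x ∘ₗ g y - g y ∘ₗ n x) + (g x ∘ₗ n y - n y ∘ₗ g x)
          - (2 : K) • (g x ∘ₗ g y - g y ∘ₗ g x) := by
  have gs : ∀ a b : V, g a b = - g b a := by
    intro a b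
    have := hga (a + b)
    simp only [map_add, LinearMap.add_apply, hga] at this
    rw [eq_neg_iff_add_eq_zero]
    abel_nf at this ⊢
    exact this
  have ns : ∀ a b : V, n a b = - n b a := by
    intro a b
    have := hna (a + b)
    simp only [map_add, LinearMap.add_apply, hna] at this
    rw [eq_neg_iff_add_eq_zero]
    abel_nf at this ⊢
    exact this
  have h : ∀ a b : V, mul a b = mul b a - g b a + n b a := by
    intro a b
    have h1 := hp1 a b
    rw [gs a b, ns a b, sub_eq_iff_eq_add] at h1
    rw [h1]; abel
  intro x y
  ext z
  simp only [LinearMap.sub_apply, LinearMap.add_apply, LinearMap.comp_apply,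
    LinearMap.flip_apply, LinearMap.smul_apply, two_smul]
  rw [h z x, h z y, h (g y z) x, h (g x z) y]
  simp only [map_add, map_sub, map_neg, gs x (g y z), gs y (g x z),
    ns x (g y z), ns y (g x z)]
  abel
end

section
/- Let x·y be a post-Lie algebra structure on (g,n), where g and n are 2-step nilpotent Lie algebras, and suppose [L(x)+R(x), ad(y)] = ad(x·y + y·x) for all x,y ∈ V. Then 2[L(x),ad(y)] + 2[ad(x),L(y)] = [ad(y),Ad(x)] + [Ad(y),ad(x)] for all x,y ∈ V. -/
/-- If `x·y` is a PA-structure on 2-step nilpotent `(g,n)` and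
`[L(x)+R(x), ad(y)] = ad(x·y + y·x)` for all `x,y`, then
`2[L(x),ad(y)] + 2[ad(x),L(y)] = [ad(y),Ad(x)] + [Ad(y),ad(x)]` for all `x,y`. -/
theorem stmt4 {K V : Type*} [Field K] [CharZero K] [AddCommGroup V] [Module K V]
    (g n : V →ₗ[K] V →ₗ[K] V)
    (hga : ∀ x, g x x = 0)
    (hgj : ∀ x y z, g (g x y) z + g (g y z) x + g (g z x) y = 0)
    (hna : ∀ x, n x x = 0)
    (hnj : ∀ x y z, n (n x y) z + n (n y z) x + n (n z x) y = 0)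
    (hg2 : ∀ x y z, g (g x y) z = 0)
    (hn2 : ∀ x y z, n (n x y) z = 0)
    (mul : V →ₗ[K] V →ₗ[K] V)
    (hp1 : ∀ x y, mul x y - mul y x = g x y - n x y)
    (hp2 : ∀ x y z, mul (g x y) z = mul x (mul y z) - mul y (mul x z))
    (hp3 : ∀ x y z, mul x (n y z) = n (mul x y) z + n y (mul x z))
    (h12 : ∀ x y : V,
      (mul x + mul.flip x) ∘ₗ g y - g y ∘ₗ (mul x + mul.flip x)
        = g (mul x y + mul y x)) :
    ∀ x y : V,
      (2 : K) • (mul x ∘ₗ g y - g y ∘ₗ mul x) + (2 : K) • (g x ∘ₗ mul y - mul y ∘ₗ g x)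
        = (g y ∘ₗ n x - n x ∘ₗ g y) + (n y ∘ₗ g x - g x ∘ₗ n y) := by
  -- skew-symmetry of g and n
  have hsk : ∀ a b : V, g a b + g b a = 0 := by
    intro a b
    have h := hga (a + b)
    simp only [map_add, LinearMap.add_apply, hga, zero_add, add_zero] at h
    linear_combination (norm := module) h
  have hsn : ∀ a b : V, n a b + n b a = 0 := by
    intro a b
    have h := hna (a + b)
    simp only [map_add, LinearMap.add_apply, hna, zero_add, add_zero] at h
    linear_combination (norm := module) h
  have hgg : ∀ a b c : V, g a (g b c) = 0 := by
    intro a b c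
    have h := hsk a (g b c)
    rwa [hg2, add_zero] at h
  intro x y
  ext z
  have hA := LinearMap.congr_fun (h12 x y) z
  have hB := LinearMap.congr_fun (h12 y x) z
  simp only [LinearMap.sub_apply, LinearMap.add_apply, LinearMap.comp_apply,
    LinearMap.flip_apply, map_add, LinearMap.smul_apply] at hA hB ⊢
  have hA2 : g y (mul z x) - g y (mul x z) = g y (g z x) - g y (n z x) := by
    have := congrArg (g y) (hp1 z x)
    simpa only [map_sub] using this
  have hB2 : g x (mul z y) - g x (mul y z) = g x (g z y) - g x (n z y) := by
    have := congrArg (g x) (hp1 z y)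
    simpa only [map_sub] using this
  have t1 : g y (n z x) + g y (n x z) = 0 := by
    have := congrArg (g y) (hsn z x)
    simpa only [map_add, map_zero] using this
  have t2 : g x (n z y) + g x (n y z) = 0 := by
    have := congrArg (g x) (hsn z y)
    simpa only [map_add, map_zero] using this
  linear_combination (norm := module)
    hA + hA2 - hB - hB2 - hp1 (g y z) x + hp1 (g x z) y
      + hgg y z x - hgg x z y - hg2 y z x + hg2 x z y
      - t1 + t2 + hsn (g y z) x - hsn (g x z) y
end

section
/- Let x·y be a post-Lie algebra structure on (g,n), where g and n are 2-step nilpotent Lie algebras. Then x∘y := (1/2)(x·y + y·x) defines a commutative post-Lie algebra structure on g if and only if [L(x)+R(x), ad(y)] = ad(x·y + y·x) holds for all x,y ∈ V. -/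
/-- Let `x·y` be a PA-structure on 2-step nilpotent `(g,n)`. Then
`x∘y = (1/2)(x·y + y·x)` is a CPA-structure on `g` iff
`[L(x)+R(x), ad(y)] = ad(x·y + y·x)` for all `x,y`. -/
theorem stmt5 {K V : Type*} [Field K] [CharZero K] [AddCommGroup V] [Module K V]
    (g n : V →ₗ[K] V →ₗ[K] V)
    (hga : ∀ x, g x x = 0)
    (hgj : ∀ x y z, g (g x y) z + g (g y z) x + g (g z x) y = 0)
    (hna : ∀ x, n x x = 0)
    (hnj : ∀ x y z, n (n x y) z + n (n y z) x + n (n z x) y = 0)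
    (hg2 : ∀ x y z, g (g x y) z = 0)
    (hn2 : ∀ x y z, n (n x y) z = 0)
    (mul : V →ₗ[K] V →ₗ[K] V)
    (hp1 : ∀ x y, mul x y - mul y x = g x y - n x y)
    (hp2 : ∀ x y z, mul (g x y) z = mul x (mul y z) - mul y (mul x z))
    (hp3 : ∀ x y z, mul x (n y z) = n (mul x y) z + n y (mul x z))
    (c : V → V → V)
    (hc : ∀ x y, c x y = (2 : K)⁻¹ • (mul x y + mul y x)) :
    ((∀ x y, c x y = c y x) ∧
     (∀ x y z, c (g x y) z = c x (c y z) - c y (c x z)) ∧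
     (∀ x y z, c x (g y z) = g (c x y) z + g y (c x z)))
    ↔ (∀ x y : V,
        (mul x + mul.flip x) ∘ₗ g y - g y ∘ₗ (mul x + mul.flip x)
          = g (mul x y + mul y x)) := by
  have gskew : ∀ a b, g a b = - g b a := by
    intro a b
    have h := hga (a + b)
    simp only [map_add, LinearMap.add_apply, hga] at h
    linear_combination (norm := module) h
  have nskew : ∀ a b, n a b = - n b a := by
    intro a b
    have h := hna (a + b)
    simp only [map_add, LinearMap.add_apply, hna] at h
    linear_combination (norm := module) h
  have gg : ∀ a b e, g a (g b e) = 0 := by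
    intro a b e; rw [gskew, hg2, neg_zero]
  have nn : ∀ a b e, n a (n b e) = 0 := by
    intro a b e; rw [nskew, hn2, neg_zero]
  have Hpt : ∀ x y : V,
      ((mul x + mul.flip x) ∘ₗ g y - g y ∘ₗ (mul x + mul.flip x)
          = g (mul x y + mul y x)) ↔
      (∀ e, mul x (g y e) + mul (g y e) x
          = g (mul x y) e + g (mul y x) e + g y (mul x e) + g y (mul e x)) := by
    intro x y
    rw [LinearMap.ext_iff]
    refine forall_congr' fun e => ?_
    simp only [LinearMap.sub_apply, LinearMap.comp_apply, LinearMap.add_apply,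
      LinearMap.flip_apply, map_add]
    constructor <;> intro h <;> linear_combination (norm := module) h
  constructor
  · rintro ⟨h1, h2, h3⟩ x y
    rw [Hpt x y]
    intro e
    have h := h3 x y e
    simp only [hc, map_smul, LinearMap.smul_apply, map_add, LinearMap.add_apply] at h
    linear_combination (norm := module) (2:K) • h
  · intro H
    have hE : ∀ a b e, mul a (g b e) + mul (g b e) a
        = g (mul a b) e + g (mul b a) e + g b (mul a e) + g b (mul e a) :=
      fun a b e => (Hpt a b).mp (H a b) e
    refine ⟨fun x y => ?_, fun x y z => ?_, fun x y z => ?_⟩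
    · rw [hc, hc]; module
    · -- the hard CPA identity
      have e1 : mul z y = mul y z - g y z + n y z := by
        linear_combination (norm := module) -(hp1 y z)
      have e2 : mul z x = mul x z - g x z + n x z := by
        linear_combination (norm := module) -(hp1 x z)
      have A1 : mul x (mul z y) = mul x (mul y z) - mul x (g y z) + mul x (n y z) := by
        rw [e1, map_add, map_sub]
      have A2 : mul (mul z y) x = mul (mul y z) x - mul (g y z) x + mul (n y z) x := by
        rw [e1, map_add, map_sub, LinearMap.add_apply, LinearMap.sub_apply]
      have A3 : mul y (mul z x) = mul y (mul x z) - mul y (g x z) + mul y (n x z) := by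
        rw [e2, map_add, map_sub]
      have A4 : mul (mul z x) y = mul (mul x z) y - mul (g x z) y + mul (n x z) y := by
        rw [e2, map_add, map_sub, LinearMap.add_apply, LinearMap.sub_apply]
      have B1 : mul (mul y z) x = mul x (mul y z) - g x (mul y z) + n x (mul y z) := by
        linear_combination (norm := module) -(hp1 x (mul y z))
      have B2 : mul (mul x z) y = mul y (mul x z) - g y (mul x z) + n y (mul x z) := by
        linear_combination (norm := module) -(hp1 y (mul x z))
      have C1 : g x (mul z y) = g x (mul y z) + g x (n y z) := by
        rw [e1, map_add, map_sub, gg, sub_zero]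
      have C2 : g y (mul z x) = g y (mul x z) + g y (n x z) := by
        rw [e2, map_add, map_sub, gg, sub_zero]
      have D1 : mul (n y z) x = mul x (n y z) - g x (n y z) := by
        linear_combination (norm := module) -(hp1 x (n y z)) + nn x y z
      have D2 : mul (n x z) y = mul y (n x z) - g y (n x z) := by
        linear_combination (norm := module) -(hp1 y (n x z)) + nn y x z
      have F1 : n (mul x y) z - n (mul y x) z = n (g x y) z := by
        have h2 : n (mul x y - mul y x) z = n (g x y - n x y) z := by rw [hp1]
        rw [map_sub, LinearMap.sub_apply, map_sub, LinearMap.sub_apply, hn2, sub_zero] at h2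
        exact h2
      have G1 : mul (g x y) z - mul z (g x y) = - n (g x y) z := by
        linear_combination (norm := module) hp1 (g x y) z + hg2 x y z
      have KEY : mul x (mul y z) + mul x (mul z y) + mul (mul y z) x + mul (mul z y) x
          - mul y (mul x z) - mul y (mul z x) - mul (mul x z) y - mul (mul z x) y
          = (2:K) • (mul (g x y) z + mul z (g x y)) := by
        linear_combination (norm := module)
          A1 + A2 - A3 - A4 - (4:K) • hp2 x y z + (2:K) • B1 - (2:K) • B2
          - hE x y z + hE y x z + C1 - C2 + D1 - D2
          + (2:K) • hp3 x y z - (2:K) • hp3 y x z + (2:K) • F1 + (2:K) • G1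
      simp only [hc, map_smul, LinearMap.smul_apply, map_add, LinearMap.add_apply]
      linear_combination (norm := module) (-((2:K)⁻¹ * (2:K)⁻¹)) • KEY
    · have h := hE x y z
      simp only [hc, map_smul, LinearMap.smul_apply, map_add, LinearMap.add_apply]
      linear_combination (norm := module) ((2:K)⁻¹) • h
end

section
/- Let x·y be a pre-Lie algebra structure on a 2-step nilpotent Lie algebra g. Then x∘y := (1/2)(x·y + y·x) defines a commutative post-Lie algebra structure on g if and only if every left multiplication L(x) is a derivation of g. -/
/-- Let `x·y` be a pre-Lie algebra structure on a 2-step nilpotent Lie algebra `g`.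
Then `x∘y = (1/2)(x·y + y·x)` is a CPA-structure on `g` iff every left multiplication
`L(x)` is a derivation of `g`. -/
theorem stmt8 {K V : Type*} [Field K] [CharZero K] [AddCommGroup V] [Module K V]
    (g : V →ₗ[K] V →ₗ[K] V)
    (hga : ∀ x, g x x = 0)
    (hgj : ∀ x y z, g (g x y) z + g (g y z) x + g (g z x) y = 0)
    (hg2 : ∀ x y z, g (g x y) z = 0)
    (mul : V →ₗ[K] V →ₗ[K] V)
    (hp1 : ∀ x y, mul x y - mul y x = g x y)
    (hp2 : ∀ x y z, mul (g x y) z = mul x (mul y z) - mul y (mul x z))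
    (c : V → V → V)
    (hc : ∀ x y, c x y = (2 : K)⁻¹ • (mul x y + mul y x)) :
    ((∀ x y, c x y = c y x) ∧
     (∀ x y z, c (g x y) z = c x (c y z) - c y (c x z)) ∧
     (∀ x y z, c x (g y z) = g (c x y) z + g y (c x z)))
    ↔ (∀ x y z, mul x (g y z) = g (mul x y) z + g y (mul x z)) := by
  have gskew : ∀ a b, g a b = - g b a := by
    intro a b
    have h := hga (a + b)
    simp only [map_add, LinearMap.add_apply, hga, zero_add, add_zero] at h
    exact eq_neg_of_add_eq_zero_right h
  have g2r : ∀ a b d, g d (g a b) = 0 := by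
    intro a b d
    rw [gskew, hg2, neg_zero]
  have hp1' : ∀ a b, mul a b = mul b a + g a b := by
    intro a b
    exact (eq_add_of_sub_eq (hp1 a b)).trans (add_comm _ _)
  have gl : ∀ a b d, g (mul a b) d = g (mul b a) d := by
    intro a b d
    rw [hp1' a b, map_add, LinearMap.add_apply, hg2, add_zero]
  have gr : ∀ a b d, g d (mul a b) = g d (mul b a) := by
    intro a b d
    rw [hp1' a b, map_add, g2r, add_zero]
  have mgc : ∀ a b d, mul (g a b) d = mul d (g a b) := by
    intro a b d
    have h := hp1 (g a b) d
    rw [hg2] at h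
    exact sub_eq_zero.mp h
  constructor
  · rintro ⟨h1, h2, h3⟩ x y z
    have h := h3 x y z
    rw [hc, hc, hc] at h
    simp only [map_add, map_smul, LinearMap.add_apply, LinearMap.smul_apply, smul_add] at h
    linear_combination (norm := module) h - (2:K)⁻¹ • (mgc y z x) +
      (2:K)⁻¹ • (gl y x z) + (2:K)⁻¹ • (gr z x y)
  · intro der
    refine ⟨?_, ?_, ?_⟩
    · intro x y
      rw [hc, hc, add_comm]
    · intro x y z
      have r1 := hp2 x y z
      have rm := mgc x y z
      have e1 : mul x (mul z y) = mul x (mul y z) + (g (mul x z) y + g z (mul x y)) := by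
        rw [hp1' z y, map_add, der x z y]
      have e2 : mul y (mul z x) = mul y (mul x z) + (g (mul y z) x + g z (mul x y)) := by
        rw [hp1' z x, map_add, der y z x, gr y x z]
      have e3 : mul (mul y z) x = mul x (mul y z) + g (mul y z) x := hp1' _ _
      have e4 : mul (mul z y) x = mul x (mul z y) + g (mul y z) x := by
        rw [hp1' (mul z y) x, gl z y x]
      have e5 : mul (mul x z) y = mul y (mul x z) + g (mul x z) y := hp1' _ _
      have e6 : mul (mul z x) y = mul y (mul z x) + g (mul x z) y := by
        rw [hp1' (mul z x) y, gl z x y]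
      simp only [hc]
      simp only [map_add, map_smul, LinearMap.add_apply, LinearMap.smul_apply, smul_add] at *
      linear_combination (norm := module) r1 - (2:K)⁻¹ • rm - (2:K)⁻¹ • e1 + (2:K)⁻¹ • e2
        - (4:K)⁻¹ • e3 - (4:K)⁻¹ • e4 + (4:K)⁻¹ • e5 + (4:K)⁻¹ • e6
    · intro x y z
      rw [hc, hc, hc]
      simp only [map_add, map_smul, LinearMap.add_apply, LinearMap.smul_apply, smul_add]
      linear_combination (norm := module) der x y z + (2:K)⁻¹ • (mgc y z x) -
        (2:K)⁻¹ • (gl y x z) - (2:K)⁻¹ • (gr z x y)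
end

section
/- Let x·y be a pre-Lie algebra structure on a finite-dimensional 2-step nilpotent Lie algebra g with Z(g) ⊆ [g,g], such that all left multiplications L(x) are derivations of g. Then every L(x) is a nilpotent linear operator. -/
/-- Let `x·y` be a pre-Lie algebra structure on a finite-dimensional 2-step nilpotent
Lie algebra `g` with `Z(g) ⊆ [g,g]`, such that all `L(x)` are derivations of `g`.
Then every `L(x)` is nilpotent. -/
theorem stmt9 {K V : Type*} [Field K] [CharZero K] [AddCommGroup V] [Module K V]
    [FiniteDimensional K V]
    (g : V →ₗ[K] V →ₗ[K] V)
    (hga : ∀ x, g x x = 0)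
    (hgj : ∀ x y z, g (g x y) z + g (g y z) x + g (g z x) y = 0)
    (hg2 : ∀ x y z, g (g x y) z = 0)
    (hz : ∀ x : V, (∀ y, g x y = 0) →
      x ∈ Submodule.span K {v : V | ∃ a b, v = g a b})
    (mul : V →ₗ[K] V →ₗ[K] V)
    (hp1 : ∀ x y, mul x y - mul y x = g x y)
    (hp2 : ∀ x y z, mul (g x y) z = mul x (mul y z) - mul y (mul x z))
    (hder : ∀ x y z, mul x (g y z) = g (mul x y) z + g y (mul x z)) :
    ∀ x : V, IsNilpotent (mul x : Module.End K V) := by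
  classical
  set W : Submodule K V := Submodule.span K {v : V | ∃ a b, v = g a b} with hWdef
  -- g is skew-symmetric
  have hskew : ∀ a b : V, g a b = - g b a := by
    intro a b
    have h0 := hga (a + b)
    rw [map_add g a b, LinearMap.add_apply, map_add, map_add, hga, hga,
      zero_add, add_zero] at h0
    exact eq_neg_of_add_eq_zero_left h0
  -- brackets lie in W
  have hmemW : ∀ a b : V, g a b ∈ W := by
    intro a b
    exact Submodule.subset_span ⟨a, b, rfl⟩
  -- W is central: g w y = 0 for w ∈ W
  have hWg : ∀ w ∈ W, ∀ y : V, g w y = 0 := by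
    intro w hw
    induction hw using Submodule.span_induction with
    | mem v hv => obtain ⟨a, b, rfl⟩ := hv; exact fun y => hg2 a b y
    | zero => intro y; simp
    | add u v hu hv hu' hv' =>
        intro y
        rw [map_add, LinearMap.add_apply, hu' y, hv' y, add_zero]
    | smul c u hu hu' =>
        intro y
        rw [map_smul, LinearMap.smul_apply, hu' y, smul_zero]
  have hgW : ∀ y : V, ∀ w ∈ W, g y w = 0 := by
    intro y w hw
    rw [hskew, hWg w hw y, neg_zero]
  -- multiplication maps W into W (left arg arbitrary)
  have hWmulR : ∀ a : V, ∀ w ∈ W, mul a w ∈ W := by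
    intro a w hw
    induction hw using Submodule.span_induction with
    | mem v hv =>
        obtain ⟨c, d, rfl⟩ := hv
        rw [hder a c d]
        exact add_mem (hmemW _ _) (hmemW _ _)
    | zero => simp
    | add u v hu hv hu' hv' => rw [map_add]; exact add_mem hu' hv'
    | smul c u hu hu' => rw [map_smul]; exact Submodule.smul_mem _ _ hu'
  -- elements of W commute with everything
  have hmulWc : ∀ w ∈ W, ∀ a : V, mul w a = mul a w := by
    intro w hw a
    have h := hp1 w a
    rw [hWg w hw a] at h
    exact sub_eq_zero.mp h
  have hWmulL : ∀ w ∈ W, ∀ a : V, mul w a ∈ W := by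
    intro w hw a
    rw [hmulWc w hw a]
    exact hWmulR a w hw
  -- W · W = 0
  have hWW : ∀ w ∈ W, ∀ w' ∈ W, mul w w' = 0 := by
    intro w hw w' hw'
    induction hw' using Submodule.span_induction with
    | mem v hv =>
        obtain ⟨c, d, rfl⟩ := hv
        rw [hder w c d, hWg _ (hWmulL w hw c) d, hgW c _ (hWmulL w hw d), add_zero]
    | zero => simp
    | add u v hu hv hu' hv' => rw [map_add, hu', hv', add_zero]
    | smul c u hu hu' => rw [map_smul, hu', smul_zero]
  -- left mult by elements of W commutes with all left mults
  have hswap : ∀ w ∈ W, ∀ a b : V, mul w (mul a b) = mul a (mul w b) := by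
    intro w hw a b
    have h := hp2 w a b
    rw [hWg w hw a] at h
    simp only [map_zero, LinearMap.zero_apply] at h
    exact sub_eq_zero.mp h.symm
  -- "ρ is multiplicative": for w ∈ W
  have hrho : ∀ w ∈ W, ∀ a b : V, mul a (mul b w) = mul (mul a b) w := by
    intro w hw a b
    rw [← hmulWc w hw b, ← hswap w hw a b, hmulWc w hw (mul a b)]
  -- quotient helpers
  have hQeq : ∀ {u v : V}, u - v ∈ W → W.mkQ u = W.mkQ v := by
    intro u v h
    rw [Submodule.mkQ_apply, Submodule.mkQ_apply]
    exact (Submodule.Quotient.eq W).mpr h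
  have hQeq' : ∀ {u v : V}, W.mkQ u = W.mkQ v → u - v ∈ W := by
    intro u v h
    rw [Submodule.mkQ_apply, Submodule.mkQ_apply] at h
    exact (Submodule.Quotient.eq W).mp h
  have hcongr : ∀ (a : V) {b b' : V}, W.mkQ b = W.mkQ b' →
      W.mkQ (mul a b) = W.mkQ (mul a b') := by
    intro a b b' h
    apply hQeq
    rw [← map_sub]
    exact hWmulR a _ (hQeq' h)
  have hπcomm : ∀ a b : V, W.mkQ (mul a b) = W.mkQ (mul b a) := by
    intro a b
    apply hQeq
    rw [hp1 a b]
    exact hmemW a b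
  have hπlc : ∀ a b c : V, W.mkQ (mul a (mul b c)) = W.mkQ (mul b (mul a c)) := by
    intro a b c
    apply hQeq
    rw [← hp2 a b c]
    exact hWmulL _ (hmemW a b) c
  -- main part
  intro x
  have hWle : W ≤ W.comap (mul x) := fun w hw => hWmulR x w hw
  set L : Module.End K V := (mul x : Module.End K V) with hLdef
  set m : Module.End K (V ⧸ W) := Submodule.mapQ W W (mul x) hWle with hmdef
  have hmπ : ∀ v : V, m (W.mkQ v) = W.mkQ (mul x v) := by
    intro v
    rw [hmdef, Submodule.mkQ_apply, Submodule.mapQ_apply, Submodule.mkQ_apply]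
  have hmk : ∀ (k : ℕ) (v : V), (m ^ k) (W.mkQ v) = W.mkQ ((L ^ k) v) := by
    intro k
    induction k with
    | zero => intro v; simp
    | succ k ih =>
        intro v
        rw [pow_succ, Module.End.mul_apply, hmπ v, ih (mul x v),
          pow_succ, Module.End.mul_apply]
  -- the key power lemma mod W
  have hπP : ∀ (k : ℕ) (v : V),
      W.mkQ ((L ^ (k + 1)) v) = W.mkQ (mul ((L ^ k) x) v) := by
    intro k
    induction k with
    | zero => intro v; simp [pow_one, hLdef]
    | succ k ih =>
        intro v
        have h1 : (L ^ (k + 1 + 1)) v = (L ^ (k + 1)) (mul x v) := by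
          rw [pow_succ, Module.End.mul_apply]
        have h2 : (L ^ (k + 1)) x = mul x ((L ^ k) x) := by
          rw [pow_succ', Module.End.mul_apply]
        rw [h1, ih (mul x v), h2]
        calc W.mkQ (mul ((L ^ k) x) (mul x v))
            = W.mkQ (mul x (mul ((L ^ k) x) v)) := hπlc _ _ _
          _ = W.mkQ (mul x (mul v ((L ^ k) x))) := hcongr _ (hπcomm _ _)
          _ = W.mkQ (mul v (mul x ((L ^ k) x))) := hπlc _ _ _
          _ = W.mkQ (mul (mul x ((L ^ k) x)) v) := hπcomm _ _
  -- exact power identity on W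
  have hLW : ∀ (k : ℕ), ∀ w ∈ W, (L ^ (k + 1)) w = mul ((L ^ k) x) w := by
    intro k
    induction k with
    | zero => intro w hw; simp [pow_one, hLdef]
    | succ k ih =>
        intro w hw
        have h1 : (L ^ (k + 1 + 1)) w = mul x ((L ^ (k + 1)) w) := by
          rw [pow_succ', Module.End.mul_apply]
        have h2 : (L ^ (k + 1)) x = mul x ((L ^ k) x) := by
          rw [pow_succ', Module.End.mul_apply]
        rw [h1, ih w hw, h2, hrho w hw x ((L ^ k) x)]
  -- m is nilpotent
  have hmnil : IsNilpotent m := by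
    by_contra hcon
    have hk0 : ∀ k : ℕ, m ^ k ≠ 0 := fun k h => hcon ⟨k, h⟩
    -- range stabilization
    have hrle : ∀ k : ℕ, LinearMap.range (m ^ (k + 1)) ≤ LinearMap.range (m ^ k) := by
      intro k u hu
      obtain ⟨v, rfl⟩ := hu
      rw [pow_succ, Module.End.mul_apply]
      exact ⟨m v, rfl⟩
    set f : ℕ → ℕ := fun k => Module.finrank K (LinearMap.range (m ^ k)) with hfdef
    have hfanti : ∀ k, f (k + 1) ≤ f k := fun k => Submodule.finrank_mono (hrle k)
    have hex : ∃ n : ℕ, f (n + 1) = f n := by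
      by_contra hc
      push_neg at hc
      have hlt : ∀ k, f (k + 1) < f k := fun k => lt_of_le_of_ne (hfanti k) (hc k)
      have hbound : ∀ k, f k + k ≤ f 0 := by
        intro k
        induction k with
        | zero => simp
        | succ k ih => have := hlt k; omega
      have := hbound (f 0 + 1); omega
    obtain ⟨n, hn⟩ := hex
    have hstep : LinearMap.range (m ^ (n + 1)) = LinearMap.range (m ^ n) :=
      Submodule.eq_of_le_of_finrank_le (hrle n) hn.ge
    have hstab : ∀ k : ℕ, LinearMap.range (m ^ (n + k)) = LinearMap.range (m ^ n) := by
      intro k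
      induction k with
      | zero => rfl
      | succ k ih =>
          have hc : m ^ (n + k + 1) = m * m ^ (n + k) := by rw [pow_succ']
          have hc' : m ^ (n + 1) = m * m ^ n := by rw [pow_succ']
          rw [show n + (k + 1) = n + k + 1 from rfl, hc, Module.End.mul_eq_comp,
            LinearMap.range_comp, ih, ← LinearMap.range_comp, ← Module.End.mul_eq_comp,
            ← hc', hstep]
    -- construct the idempotent-mod-W element e
    set p : V := (L ^ n) x with hpdef
    have hpr : W.mkQ p ∈ LinearMap.range (m ^ ((n + 1) + (n + 1))) := by
      have h1 : W.mkQ p = (m ^ n) (W.mkQ x) := (hmk n x).symm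
      have h2 : LinearMap.range (m ^ ((n + 1) + (n + 1))) = LinearMap.range (m ^ n) := by
        have h3 := hstab (n + 2)
        rwa [show n + (n + 2) = (n + 1) + (n + 1) from by omega] at h3
      rw [h2, h1]
      exact ⟨W.mkQ x, rfl⟩
    obtain ⟨wq, hwq⟩ := hpr
    obtain ⟨w, rfl⟩ := Submodule.mkQ_surjective W wq
    set e : V := mul p w with hedef
    have he1 : W.mkQ e = (m ^ (n + 1)) (W.mkQ w) := by
      rw [hmk (n + 1) w, hπP n w]
    have he2 : W.mkQ (mul p e) = (m ^ (n + 1)) (W.mkQ e) := by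
      rw [hmk (n + 1) e, hπP n e]
    have he2' : W.mkQ (mul p e) = W.mkQ p := by
      rw [he2, he1, ← Module.End.mul_apply, ← pow_add]
      exact hwq
    have hidem : W.mkQ (mul e e) = W.mkQ e := by
      calc W.mkQ (mul e e) = W.mkQ (mul e (mul p w)) := rfl
        _ = W.mkQ (mul p (mul e w)) := hπlc _ _ _
        _ = W.mkQ (mul p (mul w e)) := hcongr _ (hπcomm _ _)
        _ = W.mkQ (mul w (mul p e)) := hπlc _ _ _
        _ = W.mkQ (mul w p) := hcongr _ he2'
        _ = W.mkQ (mul p w) := hπcomm _ _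
        _ = W.mkQ e := rfl
    have hene : W.mkQ e ≠ 0 := by
      intro h0
      have hp0 : W.mkQ p = 0 := by rw [← he2', he2, h0, map_zero]
      have hpW : p ∈ W := by
        rwa [Submodule.mkQ_apply, Submodule.Quotient.mk_eq_zero] at hp0
      apply hk0 (n + 1)
      apply LinearMap.ext
      intro u
      obtain ⟨v, rfl⟩ := Submodule.mkQ_surjective W u
      rw [hmk (n + 1) v, hπP n v, LinearMap.zero_apply, Submodule.mkQ_apply,
        Submodule.Quotient.mk_eq_zero]
      exact hWmulL p hpW v
    -- now derive that e is central, contradiction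
    have hw'W : mul e e - e ∈ W := hQeq' hidem
    set w' : V := mul e e - e with hw'def
    have hee : mul e e = e + w' := by rw [hw'def]; abel
    have hρidem : ∀ ζ ∈ W, mul e (mul e ζ) = mul e ζ := by
      intro ζ hζ
      calc mul e (mul e ζ) = mul e (mul ζ e) := by rw [hmulWc ζ hζ e]
        _ = mul ζ (mul e e) := (hswap ζ hζ e e).symm
        _ = mul ζ e + mul ζ w' := by rw [hee, map_add]
        _ = mul e ζ := by rw [hWW ζ hζ w' hw'W, add_zero, hmulWc ζ hζ e]
    have hωmem : ∀ b : V, mul e (mul e b) - mul e b ∈ W := by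
      intro b
      apply hQeq'
      calc W.mkQ (mul e (mul e b)) = W.mkQ (mul e (mul b e)) := hcongr _ (hπcomm _ _)
        _ = W.mkQ (mul b (mul e e)) := hπlc _ _ _
        _ = W.mkQ (mul b e) := hcongr _ hidem
        _ = W.mkQ (mul e b) := hπcomm _ _
    have key1 : ∀ b : V, g e (mul e b) = 0 := by
      intro b
      have hzW : g e (mul e b) ∈ W := hmemW e (mul e b)
      have h2 : mul e (g e (mul e b)) = g e (mul e b) + g e (mul e b) := by
        have hd := hder e e (mul e b)
        rw [hee] at hd
        have h1' : g (e + w') (mul e b) = g e (mul e b) := by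
          rw [map_add g e w', LinearMap.add_apply, hWg w' hw'W (mul e b), add_zero]
        have hδ : mul e (mul e b) = mul e b + (mul e (mul e b) - mul e b) := by abel
        have h2' : g e (mul e (mul e b)) = g e (mul e b) := by
          rw [hδ, map_add, hgW e _ (hωmem b), add_zero]
        rw [h1', h2'] at hd
        exact hd
      have hr := hρidem _ hzW
      rw [h2, map_add, h2] at hr
      -- hr : (z + z) + (z + z) = z + z  where z = g e (mul e b)
      have hzz : g e (mul e b) + g e (mul e b) = 0 := by
        have hr' : (g e (mul e b) + g e (mul e b)) + (g e (mul e b) + g e (mul e b))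
            = (g e (mul e b) + g e (mul e b)) + 0 := by rw [add_zero]; exact hr
        exact add_left_cancel hr'
      have h2smul : (2 : K) • g e (mul e b) = 0 := by rw [two_smul]; exact hzz
      rcases smul_eq_zero.mp h2smul with h | h
      · exact absurd h (by norm_num)
      · exact h
    have key2 : ∀ b : V, g e (b - mul e b) = 0 := by
      intro b
      set b₀ : V := b - mul e b with hb₀def
      have h0 : mul e b₀ ∈ W := by
        have hcalc : mul e b₀ = -(mul e (mul e b) - mul e b) := by
          rw [hb₀def, map_sub]; abel
        rw [hcalc]
        exact neg_mem (hωmem b)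
      have hzW : g e b₀ ∈ W := hmemW e b₀
      have hαz : mul e (g e b₀) = g e b₀ := by
        have hd := hder e e b₀
        rw [hee, map_add g e w', LinearMap.add_apply, hWg w' hw'W b₀, add_zero,
          hgW e _ h0, add_zero] at hd
        exact hd
      have hb0e : mul b₀ e ∈ W := by
        have h := hp1 b₀ e
        have hge : g b₀ e = -(g e b₀) := hskew b₀ e
        rw [hge] at h
        have h' : mul b₀ e = mul e b₀ - g e b₀ := by
          have := sub_eq_iff_eq_add.mp h
          rw [this]; abel
        rw [h']
        exact sub_mem h0 hzW
      have hmain := hp2 e b₀ e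
      have hL' : mul (g e b₀) e = g e b₀ := by
        rw [hmulWc _ hzW e, hαz]
      rw [hL', hee, map_add] at hmain
      -- hmain : z = mul e (mul b₀ e) - (mul b₀ e + mul b₀ w')
      have happ := congrArg (fun t => mul e t) hmain
      simp only [map_sub, map_add] at happ
      have hzero : mul e (mul b₀ w') = 0 := by
        rw [← hmulWc w' hw'W b₀, ← hswap w' hw'W e b₀]
        exact hWW w' hw'W _ h0
      rw [hαz, hρidem _ hb0e, hzero, add_zero, sub_self] at happ
      exact happ
    have hzero_all : ∀ b : V, g e b = 0 := by
      intro b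
      have h := key2 b
      rw [map_sub] at h
      rw [key1 b, sub_zero] at h
      exact h
    have heW : e ∈ W := hz e hzero_all
    exact hene (by rwa [Submodule.mkQ_apply, Submodule.Quotient.mk_eq_zero])
  -- assemble
  obtain ⟨n, hn⟩ := hmnil
  have hLn : ∀ y : V, (L ^ n) y ∈ W := by
    intro y
    have h := hmk n y
    rw [hn, LinearMap.zero_apply] at h
    rw [← Submodule.Quotient.mk_eq_zero W, ← Submodule.mkQ_apply]
    exact h.symm
  have hkill : ∀ w ∈ W, (L ^ (n + 1)) w = 0 := by
    intro w hw
    rw [hLW n w hw]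
    exact hWW _ (hLn x) w hw
  refine ⟨(n + 1) + n, ?_⟩
  apply LinearMap.ext
  intro y
  rw [pow_add, Module.End.mul_apply, LinearMap.zero_apply]
  exact hkill _ (hLn y)
end

section
/- Let x·y be a post-Lie algebra structure on (g,n) where g and n are 2-step nilpotent. Then x∘y := (1/2)(x·y + y·x) defines a commutative post-Lie algebra structure on n if and only if both identities hold for all x,y ∈ V: (i) [ad(x), Ad(y)] = Ad([x,y]); (ii) L({x,y}) − L([x,y]) = (1/2)( ad({x,y}) + [ad(y),L(x)] + [L(y),ad(x)] ). -/
/-- Let `x·y` be a PA-structure on 2-step nilpotent `(g,n)`. Then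
`x∘y = (1/2)(x·y + y·x)` is a CPA-structure on `n` iff for all `x,y`:
(i) `[ad(x),Ad(y)] = Ad([x,y])`, and
(ii) `L({x,y}) − L([x,y]) = (1/2)(ad({x,y}) + [ad(y),L(x)] + [L(y),ad(x)])`. -/
theorem stmt10 {K V : Type*} [Field K] [CharZero K] [AddCommGroup V] [Module K V]
    (g n : V →ₗ[K] V →ₗ[K] V)
    (hga : ∀ x, g x x = 0)
    (hgj : ∀ x y z, g (g x y) z + g (g y z) x + g (g z x) y = 0)
    (hna : ∀ x, n x x = 0)
    (hnj : ∀ x y z, n (n x y) z + n (n y z) x + n (n z x) y = 0)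
    (hg2 : ∀ x y z, g (g x y) z = 0)
    (hn2 : ∀ x y z, n (n x y) z = 0)
    (mul : V →ₗ[K] V →ₗ[K] V)
    (hp1 : ∀ x y, mul x y - mul y x = g x y - n x y)
    (hp2 : ∀ x y z, mul (g x y) z = mul x (mul y z) - mul y (mul x z))
    (hp3 : ∀ x y z, mul x (n y z) = n (mul x y) z + n y (mul x z))
    (c : V → V → V)
    (hc : ∀ x y, c x y = (2 : K)⁻¹ • (mul x y + mul y x)) :
    ((∀ x y, c x y = c y x) ∧
     (∀ x y z, c (n x y) z = c x (c y z) - c y (c x z)) ∧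
     (∀ x y z, c x (n y z) = n (c x y) z + n y (c x z)))
    ↔ ((∀ x y : V, g x ∘ₗ n y - n y ∘ₗ g x = n (g x y)) ∧
       (∀ x y : V,
         mul (n x y) - mul (g x y)
           = (2 : K)⁻¹ • (g (n x y) + (g y ∘ₗ mul x - mul x ∘ₗ g y)
               + (mul y ∘ₗ g x - g x ∘ₗ mul y)))) := by
  -- skew symmetry of g and n
  have hgsk : ∀ x y : V, g y x = - g x y := by
    intro x y
    have h := hga (x + y)
    simp only [map_add, LinearMap.add_apply, hga, zero_add, add_zero] at h
    linear_combination (norm := module) h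
  have hnsk : ∀ x y : V, n y x = - n x y := by
    intro x y
    have h := hna (x + y)
    simp only [map_add, LinearMap.add_apply, hna, zero_add, add_zero] at h
    linear_combination (norm := module) h
  have hg2' : ∀ x y z : V, g x (g y z) = 0 := by
    intro x y z; rw [hgsk (g y z) x, hg2, neg_zero]
  have hn2' : ∀ x y z : V, n x (n y z) = 0 := by
    intro x y z; rw [hnsk (n y z) x, hn2, neg_zero]
  -- hp1 pushed through a linear map
  have hF : ∀ (f : V →ₗ[K] V) (x y : V),
      f (mul x y) - f (mul y x) = f (g x y) - f (n x y) := by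
    intro f x y
    have h := congrArg f (hp1 x y)
    simpa [map_sub] using h
  -- hp1 pushed through n in the first slot
  have hR : ∀ x y z : V,
      n (mul x y) z - n (mul y x) z = n (g x y) z - n (n x y) z := by
    intro x y z
    have h := congrArg (fun w => n w z) (hp1 x y)
    simpa [map_sub, LinearMap.sub_apply] using h
  -- n (g y x) z = - n (g x y) z
  have hgneg : ∀ x y z : V, n (g y x) z = - n (g x y) z := by
    intro x y z
    rw [hgsk x y, map_neg, LinearMap.neg_apply]
  -- key identity for axiom (3)
  have keyA : ∀ x y z : V,
      c x (n y z) - (n (c x y) z + n y (c x z))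
        = (2:K)⁻¹ • (n (g x y) z + n y (g x z) - g x (n y z)) := by
    intro x y z
    simp only [hc, map_add, map_smul, LinearMap.add_apply, LinearMap.smul_apply]
    linear_combination (norm := module) hp3 x y z - (2:K)⁻¹ • hp1 x (n y z)
      + (2:K)⁻¹ • hn2' x y z + (2:K)⁻¹ • hR x y z - (2:K)⁻¹ • hn2 x y z
      + (2:K)⁻¹ • hF (n y) x z - (2:K)⁻¹ • hn2' y x z
  -- key identity for axiom (2)
  have keyB : ∀ x y z : V,
      c (n x y) z - (c x (c y z) - c y (c x z))
        = (mul (n x y) z - mul (g x y) z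
            - (2:K)⁻¹ • (g (n x y) z + (g y (mul x z) - mul x (g y z))
                + (mul y (g x z) - g x (mul y z))))
          + (4:K)⁻¹ • (g x (n y z) - n y (g x z) - (g y (n x z) - n x (g y z))
                - (2:K) • n (g x y) z) := by
    intro x y z
    simp only [hc, map_add, map_smul, LinearMap.add_apply, LinearMap.smul_apply]
    linear_combination (norm := module)
      hp2 x y z
      - (2:K)⁻¹ • hp1 (n x y) z + (2:K)⁻¹ • hn2 x y z
      + (4:K)⁻¹ • hp1 x (mul y z) + (4:K)⁻¹ • hp1 x (mul z y)
      - (4:K)⁻¹ • hp1 y (mul x z) - (4:K)⁻¹ • hp1 y (mul z x)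
      + (2:K)⁻¹ • hF (mul x) y z - (2:K)⁻¹ • hF (mul y) x z
      - (4:K)⁻¹ • hF (g x) y z - (4:K)⁻¹ • hg2' x y z
      + (4:K)⁻¹ • hF (g y) x z + (4:K)⁻¹ • hg2' y x z
      + (4:K)⁻¹ • hF (n x) y z - (4:K)⁻¹ • hn2' x y z
      - (4:K)⁻¹ • hF (n y) x z + (4:K)⁻¹ • hn2' y x z
      - (2:K)⁻¹ • hp3 x y z + (2:K)⁻¹ • hp3 y x z
      - (2:K)⁻¹ • hR x y z + (2:K)⁻¹ • hn2 x y z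
  constructor
  · rintro ⟨-, h2, h3⟩
    -- pointwise version of (i)
    have hiP : ∀ x y z : V, g x (n y z) - n y (g x z) = n (g x y) z := by
      intro x y z
      have h0 := keyA x y z
      rw [h3 x y z, sub_self] at h0
      rcases smul_eq_zero.mp h0.symm with h' | h'
      · exact absurd h' (by norm_num)
      · linear_combination (norm := module) -h'
    refine ⟨?_, ?_⟩
    · intro x y
      ext z
      simp only [LinearMap.sub_apply, LinearMap.comp_apply]
      linear_combination (norm := module) hiP x y z
    · intro x y
      ext z
      simp only [LinearMap.sub_apply, LinearMap.smul_apply, LinearMap.add_apply,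
        LinearMap.comp_apply]
      have hJ : g x (n y z) - n y (g x z) - (g y (n x z) - n x (g y z))
          - (2:K) • n (g x y) z = 0 := by
        linear_combination (norm := module) hiP x y z - hiP y x z - hgneg x y z
      have hk := keyB x y z
      rw [h2 x y z, sub_self] at hk
      linear_combination (norm := module) (-1:K) • hk - (4:K)⁻¹ • hJ
  · rintro ⟨hi, hii⟩
    have hiP : ∀ x y z : V, g x (n y z) - n y (g x z) = n (g x y) z := by
      intro x y z
      have h := DFunLike.congr_fun (hi x y) z
      simpa [LinearMap.sub_apply, LinearMap.comp_apply] using h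
    have hiiP : ∀ x y z : V,
        mul (n x y) z - mul (g x y) z
          = (2:K)⁻¹ • (g (n x y) z + (g y (mul x z) - mul x (g y z))
              + (mul y (g x z) - g x (mul y z))) := by
      intro x y z
      have h := DFunLike.congr_fun (hii x y) z
      simpa [LinearMap.sub_apply, LinearMap.smul_apply, LinearMap.add_apply,
        LinearMap.comp_apply] using h
    refine ⟨?_, ?_, ?_⟩
    · intro x y
      rw [hc, hc]
      module
    · intro x y z
      have hJ : g x (n y z) - n y (g x z) - (g y (n x z) - n x (g y z))
          - (2:K) • n (g x y) z = 0 := by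
        linear_combination (norm := module) hiP x y z - hiP y x z - hgneg x y z
      linear_combination (norm := module) keyB x y z + hiiP x y z + (4:K)⁻¹ • hJ
    · intro x y z
      linear_combination (norm := module) keyA x y z - (2:K)⁻¹ • hiP x y z
end

section
/- Let x·y be a post-Lie algebra structure on (g,n) where g is abelian and n is 2-step nilpotent. Then x∘y := (1/2)(x·y + y·x) defines a commutative post-Lie algebra structure on n if and only if {n,n}·n = 0, i.e., {x,y}·z = 0 for all x,y,z ∈ V. -/
/-- Let `x·y` be a PA-structure on `(g,n)` with `g` abelian and `n` 2-step nilpotent.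
Then `x∘y = (1/2)(x·y + y·x)` is a CPA-structure on `n` iff `{x,y}·z = 0` for all
`x,y,z`. -/
theorem stmt11 {K V : Type*} [Field K] [CharZero K] [AddCommGroup V] [Module K V]
    (n : V →ₗ[K] V →ₗ[K] V)
    (hna : ∀ x, n x x = 0)
    (hnj : ∀ x y z, n (n x y) z + n (n y z) x + n (n z x) y = 0)
    (hn2 : ∀ x y z, n (n x y) z = 0)
    (mul : V →ₗ[K] V →ₗ[K] V)
    (hp1 : ∀ x y, mul x y - mul y x = - n x y)
    (hp2 : ∀ x y z, mul x (mul y z) = mul y (mul x z))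
    (hp3 : ∀ x y z, mul x (n y z) = n (mul x y) z + n y (mul x z))
    (c : V → V → V)
    (hc : ∀ x y, c x y = (2 : K)⁻¹ • (mul x y + mul y x)) :
    ((∀ x y, c x y = c y x) ∧
     (∀ x y z, c (n x y) z = c x (c y z) - c y (c x z)) ∧
     (∀ x y z, c x (n y z) = n (c x y) z + n y (c x z)))
    ↔ (∀ x y z : V, mul (n x y) z = 0) := by
  -- antisymmetry of n
  have hanti : ∀ x y, n x y = - n y x := by
    intro x y
    have h := hna (x + y)
    simp only [map_add, LinearMap.add_apply, hna, zero_add, add_zero] at h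
    exact eq_neg_of_add_eq_zero_right h
  have hswap : ∀ a b, mul a b = mul b a - n a b := by
    intro a b
    have h := hp1 a b
    rw [sub_eq_iff_eq_add] at h
    rw [h, neg_add_eq_sub]
  have key1 : ∀ x y z, mul (n x y) z = mul z (n x y) := by
    intro x y z
    have h := hp1 (n x y) z
    rw [hn2, neg_zero, sub_eq_zero] at h
    exact h
  have key2 : ∀ a b y, n (mul a b) y = n (mul b a) y := by
    intro a b y
    rw [hswap a b]
    simp [map_sub, LinearMap.sub_apply, hn2]
  have key2' : ∀ a b y, n y (mul a b) = n y (mul b a) := by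
    intro a b y
    rw [hanti, key2, ← hanti]
  have mulzn : ∀ x y z, mul z (n x y) = n (mul z x) y - n (mul z y) x := by
    intro x y z
    rw [hp3, hanti x (mul z y), ← sub_eq_add_neg]
  have Dzero : ∀ x y z,
      mul x (mul y z) + mul x (mul z y) + (mul (mul y z) x + mul (mul z y) x)
      = mul y (mul x z) + mul y (mul z x) + (mul (mul x z) y + mul (mul z x) y) := by
    intro x y z
    rw [hswap (mul y z) x, hswap (mul z y) x, hswap (mul x z) y, hswap (mul z x) y]
    rw [hp2 x y z, hp2 x z y, hp2 y z x]
    rw [key2 y z x, key2 x z y]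
    rw [hswap x y]
    simp only [map_sub]
    rw [mulzn x y z]
    abel
  have cc_eq : ∀ x y z, c x (c y z) = ((2:K)⁻¹ * (2:K)⁻¹) •
      (mul x (mul y z) + mul x (mul z y) + (mul (mul y z) x + mul (mul z y) x)) := by
    intro x y z
    simp only [hc, map_add, map_smul, LinearMap.add_apply, LinearMap.smul_apply, smul_add,
      smul_smul]
  have Cc : ∀ x y z, c x (c y z) = c y (c x z) := by
    intro x y z
    rw [cc_eq x y z, cc_eq y x z, Dzero x y z]
  have C3 : ∀ x y z, c x (n y z) = n (c x y) z + n y (c x z) := by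
    intro x y z
    rw [hc, hc, hc, key1 y z x, hp3 x y z]
    simp only [map_add, map_smul, LinearMap.add_apply, LinearMap.smul_apply]
    rw [key2 y x z, key2' z x y]
    module
  constructor
  · rintro ⟨-, h2, -⟩
    intro x y z
    have h := h2 x y z
    rw [Cc x y z, sub_self, hc, ← key1 x y z] at h
    have he : (2:K)⁻¹ ≠ 0 := inv_ne_zero two_ne_zero
    have h' := (smul_eq_zero.mp h).resolve_left he
    have h4 : (2:K) • mul (n x y) z = 0 := by rw [two_smul]; exact h'
    exact (smul_eq_zero.mp h4).resolve_left two_ne_zero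
  · intro H
    refine ⟨?_, ?_, C3⟩
    · intro x y
      rw [hc, hc, add_comm (mul x y) (mul y x)]
    · intro x y z
      rw [Cc x y z, sub_self, hc, ← key1 x y z, H x y z]
      simp
end

section
/- Let x·y be a post-Lie algebra structure on (g,n) where g is abelian and n is 2-step nilpotent. If p, q, x ∈ V satisfy {x,p} = {x,q} = 0, then x·{p,q} = 0. -/
/-- Let `x·y` be a PA-structure on `(g,n)` with `g` abelian and `n` 2-step nilpotent.
If `{x,p} = {x,q} = 0`, then `x·{p,q} = 0`. -/
theorem stmt13 {K V : Type*} [Field K] [CharZero K] [AddCommGroup V] [Module K V]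
    (n : V →ₗ[K] V →ₗ[K] V)
    (hna : ∀ x, n x x = 0)
    (hnj : ∀ x y z, n (n x y) z + n (n y z) x + n (n z x) y = 0)
    (hn2 : ∀ x y z, n (n x y) z = 0)
    (mul : V →ₗ[K] V →ₗ[K] V)
    (hp1 : ∀ x y, mul x y - mul y x = - n x y)
    (hp2 : ∀ x y z, mul x (mul y z) = mul y (mul x z))
    (hp3 : ∀ x y z, mul x (n y z) = n (mul x y) z + n y (mul x z))
    (p q x : V) (hxp : n x p = 0) (hxq : n x q = 0) :
    mul x (n p q) = 0 := by
  -- antisymmetry of n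
  have hskew : ∀ a b : V, n a b = - n b a := by
    intro a b
    have h := hna (a + b)
    simp only [map_add, LinearMap.add_apply, hna, zero_add, add_zero] at h
    linear_combination (norm := abel) h
  -- x·p = p·x and x·q = q·x
  have hxp' : mul x p = mul p x := by
    have := hp1 x p; rw [hxp] at this
    have : mul x p - mul p x = 0 := by simpa using this
    linear_combination (norm := abel) this
  have hxq' : mul x q = mul q x := by
    have := hp1 x q; rw [hxq] at this
    have : mul x q - mul q x = 0 := by simpa using this
    linear_combination (norm := abel) this
  -- p·{x,q} = 0 gives {x·p, q} = - {x, p·q}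
  have h1 : n (mul x p) q = - n x (mul p q) := by
    have h := hp3 p x q
    rw [hxq, map_zero, ← hxp'] at h
    linear_combination (norm := abel) -h
  -- q·{x,p} = 0 gives {p, x·q} = {x, q·p}
  have h2 : n p (mul x q) = n x (mul q p) := by
    have h := hp3 q x p
    rw [hxp, map_zero, ← hxq'] at h
    have h' : n (mul x q) p = - n x (mul q p) := by
      linear_combination (norm := abel) -h
    rw [hskew p (mul x q), h']
    abel
  -- combine
  have key : mul x (n p q) = n x (n p q) := by
    have h := hp3 x p q
    rw [h, h1, h2]
    have hqp : mul q p - mul p q = n p q := by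
      have := hp1 q p
      rw [hskew q p] at this
      linear_combination (norm := abel) this
    calc -n x (mul p q) + n x (mul q p)
        = n x (mul q p - mul p q) := by rw [map_sub]; abel
      _ = n x (n p q) := by rw [hqp]
  rw [key, hskew x (n p q), hn2 p q x, neg_zero]
end

section
/- Let n be a Heisenberg Lie algebra of dimension 2m+1 with m ≥ 2 (basis e_i, f_i, z with {e_i, f_i} = z for 1 ≤ i ≤ m, all other brackets zero), g the abelian Lie algebra on the same space, and x·y a post-Lie algebra structure on (g,n). Then Z(n)·n = n·Z(n) = 0, i.e., z·x = x·z = 0 for all x, and x∘y := (1/2)(x·y + y·x) defines a commutative post-Lie algebra structure on n. -/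
/-!
Write `{x, y} = ω(x, y) z` and `λ(x)` for the `z`-coordinate of `x·z`. Applying the derivation
rule to `x·{y, w} = ω(y, w) x·z` and using that `{x·y, w}` is symmetric in `x, y` (as `{n, n}`
is central) gives `λ ∧ ω = 0`. For `m ≥ 2` every basis vector is `ω`-orthogonal to some pair
`e_j, f_j` with `ω(e_j, f_j) = 1`, so `λ = 0`; since `x·z = x·{e_j, f_j}` lies in `K z`, this
means `x·z = 0`, and then `z·x = x·z + {x, z} = 0`. Now `x·{y, w} = 0` makes `{x·y, w}` totally
symmetric and `x∘y = x·y + ½{x, y}`, which turns the CPA identities into the PA identities.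
-/

section

variable {K V : Type*} [Field K] [AddCommGroup V] [Module K V]

/-- A PA-structure `x·y = mul x y` on `(g, n)` with `g` abelian, both carried by `V`, where
`n` is the Lie bracket `{x, y}` of `n`. -/
structure IsAbelianPostLie (n mul : V →ₗ[K] V →ₗ[K] V) : Prop where
  mul_sub_mul : ∀ x y, mul x y - mul y x = -n x y
  mul_left_comm : ∀ x y z, mul x (mul y z) = mul y (mul x z)
  mul_bracket : ∀ x y z, mul x (n y z) = n (mul x y) z + n y (mul x z)

structure IsCommPostLie (n : V →ₗ[K] V →ₗ[K] V) (c : V → V → V) : Prop where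
  comm : ∀ x y, c x y = c y x
  bracket_mul : ∀ x y z, c (n x y) z = c x (c y z) - c y (c x z)
  mul_bracket : ∀ x y z, c x (n y z) = n (c x y) z + n y (c x z)

theorem inv_two_smul_add_self [NeZero (2 : K)] (v : V) : (2 : K)⁻¹ • (v + v) = v := by
  rw [← two_smul K v, inv_smul_smul₀ two_ne_zero]

namespace IsAbelianPostLie

variable {n mul : V →ₗ[K] V →ₗ[K] V} (hP : IsAbelianPostLie n mul)
include hP

theorem mul_swap (x y : V) : mul y x = mul x y + n x y := by
  have h := hP.mul_sub_mul x y
  rw [sub_eq_iff_eq_add] at h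
  rw [h]
  abel

theorem bracket_mul_comm (hnil : ∀ x y w, n (n x y) w = 0) (x y w : V) :
    n (mul x y) w = n (mul y x) w := by
  rw [hP.mul_swap x y, map_add, LinearMap.add_apply, hnil, add_zero]

section CoordinateOfCenter

variable {z : V} {ζ : Module.Dual K V} (hn : ∀ x y, n x y = ζ (n x y) • z)
include hn

theorem mul_bracket_eq_coord_smul (x y w : V) : mul x (n y w) = ζ (mul x (n y w)) • z := by
  rw [hP.mul_bracket, map_add, add_smul, ← hn, ← hn]

theorem coord_bracket_mul_add (x y w : V) :
    ζ (n (mul x y) w) + ζ (n y (mul x w)) = ζ (mul x z) * ζ (n y w) := by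
  have h : mul x (n y w) = ζ (n y w) • mul x z := by rw [← map_smul, ← hn]
  rw [← map_add, ← hP.mul_bracket, h, map_smul, smul_eq_mul, mul_comm]

theorem coord_mul_cyclic (halt : n.IsAlt) (hnil : ∀ x y w, n (n x y) w = 0) (x y w : V) :
    ζ (mul x z) * ζ (n y w) - ζ (mul y z) * ζ (n x w) + ζ (mul w z) * ζ (n x y) = 0 := by
  have hζ (x y w : V) : ζ (n (mul x y) w) - ζ (n (mul x w) y) = ζ (mul x z) * ζ (n y w) := by
    rw [← hP.coord_bracket_mul_add hn, ← halt.neg (mul x w) y, map_neg, sub_eq_add_neg]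
  have hcomm (x y w : V) := congrArg ζ (hP.bracket_mul_comm hnil x y w)
  linear_combination -hζ x y w + hζ y x w - hζ w x y + hcomm x y w - hcomm x w y + hcomm y w x

theorem coord_mul_eq_zero (halt : n.IsAlt) (hnil : ∀ x y w, n (n x y) w = 0) (x y w : V)
    (hyw : ζ (n y w) = 1) (hxy : ζ (n x y) = 0) (hxw : ζ (n x w) = 0) : ζ (mul x z) = 0 := by
  linear_combination hP.coord_mul_cyclic hn halt hnil x y w - ζ (mul x z) * hyw
    + ζ (mul y z) * hxw - ζ (mul w z) * hxy

end CoordinateOfCenter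

theorem inv_two_smul_mul_add_mul [NeZero (2 : K)] (x y : V) :
    (2 : K)⁻¹ • (mul x y + mul y x) = mul x y + (2 : K)⁻¹ • n x y := by
  rw [hP.mul_swap x y, ← add_assoc, smul_add, inv_two_smul_add_self]

section TwoStep

variable (halt : n.IsAlt) (hmul : ∀ x y w, mul x (n y w) = 0)
include halt hmul

theorem bracket_mul_symm (x y w : V) : n (mul x y) w = n (mul x w) y := by
  have h := hP.mul_bracket x y w
  rw [hmul, ← halt.neg (mul x w) y, ← sub_eq_add_neg, eq_comm, sub_eq_zero] at h
  exact h

theorem bracket_mul_left_comm (hnil : ∀ x y w, n (n x y) w = 0) (x y w : V) :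
    n x (mul y w) = n y (mul x w) := by
  rw [← halt.neg, ← halt.neg (mul x w) y, hP.bracket_mul_comm hnil y,
    hP.bracket_mul_symm halt hmul, hP.bracket_mul_comm hnil, hP.bracket_mul_symm halt hmul]

theorem mul_bracket_left_eq_zero (hnil : ∀ x y w, n (n x y) w = 0) (x y w : V) :
    mul (n x y) w = 0 := by
  rw [hP.mul_swap, hmul, ← halt.neg, hnil, neg_zero, add_zero]

theorem isCommPostLie_inv_two_smul_mul_add_mul [NeZero (2 : K)]
    (hnil : ∀ x y w, n (n x y) w = 0) :
    IsCommPostLie n fun x y => (2 : K)⁻¹ • (mul x y + mul y x) := by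
  have hnil' (x y w : V) : n w (n x y) = 0 := by rw [← halt.neg, hnil, neg_zero]
  refine ⟨fun x y => by rw [add_comm], fun x y w => ?_, fun x y w => ?_⟩
  · simp only [hP.inv_two_smul_mul_add_mul, map_add, map_smul, LinearMap.add_apply,
      LinearMap.smul_apply, hmul, hP.mul_bracket_left_eq_zero halt hmul hnil, smul_zero, add_zero]
    rw [hP.mul_left_comm, hP.bracket_mul_left_comm halt hmul hnil, sub_self]
  · simp only [hP.inv_two_smul_mul_add_mul, map_add, map_smul, LinearMap.add_apply,
      LinearMap.smul_apply, hmul, hnil, hnil', hP.mul_bracket_left_eq_zero halt hmul hnil,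
      smul_zero, add_zero]
    rw [← hP.mul_bracket, hmul]

end TwoStep

end IsAbelianPostLie

/-- `b (Sum.inl i)`, `b (Sum.inr (Sum.inl i))` and `b (Sum.inr (Sum.inr ()))` are `e_i`, `f_i`
and `z`. -/
structure IsHeisenbergBasis {m : ℕ} (b : Module.Basis (Fin m ⊕ Fin m ⊕ Unit) K V)
    (n : V →ₗ[K] V →ₗ[K] V) : Prop where
  alt : n.IsAlt
  ef : ∀ i j, n (b (Sum.inl i)) (b (Sum.inr (Sum.inl j)))
    = if i = j then b (Sum.inr (Sum.inr ())) else 0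
  ee : ∀ i j, n (b (Sum.inl i)) (b (Sum.inl j)) = 0
  ff : ∀ i j, n (b (Sum.inr (Sum.inl i))) (b (Sum.inr (Sum.inl j))) = 0
  ez : ∀ i, n (b (Sum.inl i)) (b (Sum.inr (Sum.inr ()))) = 0
  fz : ∀ i, n (b (Sum.inr (Sum.inl i))) (b (Sum.inr (Sum.inr ()))) = 0

namespace IsHeisenbergBasis

variable {m : ℕ} {b : Module.Basis (Fin m ⊕ Fin m ⊕ Unit) K V} {n : V →ₗ[K] V →ₗ[K] V}
  (hb : IsHeisenbergBasis b n)
include hb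

theorem center_bracket_eq_zero (x : V) : n (b (Sum.inr (Sum.inr ()))) x = 0 := by
  suffices n (b (Sum.inr (Sum.inr ()))) = 0 by rw [this, LinearMap.zero_apply]
  refine b.ext fun i => ?_
  rcases i with i | i | ⟨⟩
  · rw [← hb.alt.neg, hb.ez, neg_zero, LinearMap.zero_apply]
  · rw [← hb.alt.neg, hb.fz, neg_zero, LinearMap.zero_apply]
  · rw [hb.alt, LinearMap.zero_apply]

theorem bracket_mem_span_center (x y : V) : n x y ∈ K ∙ b (Sum.inr (Sum.inr ())) := by
  suffices n.compr₂ (K ∙ b (Sum.inr (Sum.inr ()))).mkQ = 0 by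
    simpa using LinearMap.congr_fun₂ this x y
  refine LinearMap.ext_basis b b fun i j => ?_
  rw [LinearMap.compr₂_apply, Submodule.mkQ_apply, LinearMap.zero_apply, LinearMap.zero_apply,
    Submodule.Quotient.mk_eq_zero]
  rcases i with i | i | ⟨⟩ <;> rcases j with j | j | ⟨⟩ <;>
    simp only [hb.ee, hb.ef, hb.ff, hb.ez, hb.fz, hb.center_bracket_eq_zero,
      ← hb.alt.neg (b (Sum.inl _)) (b (Sum.inr (Sum.inl _))), zero_mem, neg_mem_iff] <;>
    split_ifs <;> simp

theorem bracket_eq_coord_smul (x y : V) :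
    n x y = b.coord (Sum.inr (Sum.inr ())) (n x y) • b (Sum.inr (Sum.inr ())) := by
  obtain ⟨a, ha⟩ := Submodule.mem_span_singleton.1 (hb.bracket_mem_span_center x y)
  simp [← ha]

theorem bracket_bracket_eq_zero (x y w : V) : n (n x y) w = 0 := by
  rw [hb.bracket_eq_coord_smul x y, map_smul, LinearMap.smul_apply, hb.center_bracket_eq_zero,
    smul_zero]

section PostLie

variable {mul : V →ₗ[K] V →ₗ[K] V} (hP : IsAbelianPostLie n mul) (hm : 2 ≤ m)
include hP hm

theorem coord_mul_center_eq_zero (x : V) :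
    b.coord (Sum.inr (Sum.inr ())) (mul x (b (Sum.inr (Sum.inr ())))) = 0 := by
  suffices b.coord (Sum.inr (Sum.inr ())) ∘ₗ mul.flip (b (Sum.inr (Sum.inr ()))) = 0 by
    simpa using LinearMap.congr_fun this x
  have : Nontrivial (Fin m) := Fin.nontrivial_iff_two_le.2 hm
  have hcoord := hP.coord_mul_eq_zero hb.bracket_eq_coord_smul hb.alt hb.bracket_bracket_eq_zero
  refine b.ext fun i => ?_
  rcases i with i | i | ⟨⟩
  · obtain ⟨j, hji⟩ := exists_ne i
    simpa using hcoord _ (b (Sum.inl j)) (b (Sum.inr (Sum.inl j)))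
      (by simp [hb.ef]) (by simp [hb.ee]) (by simp [hb.ef, hji.symm])
  · obtain ⟨j, hji⟩ := exists_ne i
    simpa using hcoord _ (b (Sum.inl j)) (b (Sum.inr (Sum.inl j)))
      (by simp [hb.ef]) (by rw [← hb.alt.neg, hb.ef, if_neg hji]; simp) (by simp [hb.ff])
  · obtain ⟨j⟩ := (inferInstance : Nonempty (Fin m))
    simpa using hcoord _ (b (Sum.inl j)) (b (Sum.inr (Sum.inl j)))
      (by simp [hb.ef]) (by simp [hb.center_bracket_eq_zero]) (by simp [hb.center_bracket_eq_zero])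

theorem mul_center_eq_zero (x : V) : mul x (b (Sum.inr (Sum.inr ()))) = 0 := by
  obtain ⟨j⟩ := (Fin.pos_iff_nonempty.1 (by omega) : Nonempty (Fin m))
  have hz : b (Sum.inr (Sum.inr ())) = n (b (Sum.inl j)) (b (Sum.inr (Sum.inl j))) := by
    rw [hb.ef, if_pos rfl]
  rw [hz, hP.mul_bracket_eq_coord_smul hb.bracket_eq_coord_smul, ← hz,
    hb.coord_mul_center_eq_zero hP hm, zero_smul]

theorem center_mul_eq_zero (x : V) : mul (b (Sum.inr (Sum.inr ()))) x = 0 := by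
  rw [hP.mul_swap, hb.mul_center_eq_zero hP hm, ← hb.alt.neg, hb.center_bracket_eq_zero,
    neg_zero, add_zero]

theorem mul_bracket_eq_zero (x y w : V) : mul x (n y w) = 0 := by
  rw [hb.bracket_eq_coord_smul y w, map_smul, hb.mul_center_eq_zero hP hm, smul_zero]

end PostLie

end IsHeisenbergBasis

end

/-- Let `n` be the Heisenberg Lie algebra of dimension `2m+1`, `m ≥ 2`, with basis
`e_i, f_i, z` and `{e_i,f_i} = z`, let `g` be abelian on the same space, and let `x·y`
be a PA-structure on `(g,n)`. Then `Z(n)·n = n·Z(n) = 0` and `x∘y = (1/2)(x·y + y·x)`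
defines a CPA-structure on `n`. -/
theorem stmt14 {K V : Type*} [Field K] [CharZero K] [AddCommGroup V] [Module K V]
    (m : ℕ) (hm : 2 ≤ m)
    (b : Module.Basis (Fin m ⊕ Fin m ⊕ Unit) K V)
    (n : V →ₗ[K] V →ₗ[K] V)
    (hna : ∀ x, n x x = 0)
    (hef : ∀ i j, n (b (Sum.inl i)) (b (Sum.inr (Sum.inl j)))
      = if i = j then b (Sum.inr (Sum.inr ())) else 0)
    (hee : ∀ i j, n (b (Sum.inl i)) (b (Sum.inl j)) = 0)
    (hff : ∀ i j, n (b (Sum.inr (Sum.inl i))) (b (Sum.inr (Sum.inl j))) = 0)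
    (hez : ∀ i, n (b (Sum.inl i)) (b (Sum.inr (Sum.inr ()))) = 0)
    (hfz : ∀ i, n (b (Sum.inr (Sum.inl i))) (b (Sum.inr (Sum.inr ()))) = 0)
    (mul : V →ₗ[K] V →ₗ[K] V)
    (hp1 : ∀ x y, mul x y - mul y x = - n x y)
    (hp2 : ∀ x y z, mul x (mul y z) = mul y (mul x z))
    (hp3 : ∀ x y z, mul x (n y z) = n (mul x y) z + n y (mul x z))
    (c : V → V → V)
    (hc : ∀ x y, c x y = (2 : K)⁻¹ • (mul x y + mul y x)) :
    (∀ x : V, mul (b (Sum.inr (Sum.inr ()))) x = 0 ∧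
      mul x (b (Sum.inr (Sum.inr ()))) = 0) ∧
    ((∀ x y, c x y = c y x) ∧
     (∀ x y z, c (n x y) z = c x (c y z) - c y (c x z)) ∧
     (∀ x y z, c x (n y z) = n (c x y) z + n y (c x z))) := by
  have hb : IsHeisenbergBasis b n := ⟨hna, hef, hee, hff, hez, hfz⟩
  have hP : IsAbelianPostLie n mul := ⟨hp1, hp2, hp3⟩
  obtain rfl : c = fun x y => (2 : K)⁻¹ • (mul x y + mul y x) := funext₂ hc
  obtain ⟨hcomm, hbracket_mul, hmul_bracket⟩ := hP.isCommPostLie_inv_two_smul_mul_add_mul hna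
    (hb.mul_bracket_eq_zero hP hm) hb.bracket_bracket_eq_zero
  exact ⟨fun x => ⟨hb.center_mul_eq_zero hP hm x, hb.mul_center_eq_zero hP hm x⟩,
    hcomm, hbracket_mul, hmul_bracket⟩
end

section
/- Let n be a finite-dimensional 2-step nilpotent Lie algebra with Z(n) ⊆ {n,n}, and let x·y be an LR-structure on n with {n,n}·n = 0. Then the LR-structure is complete, i.e., all left multiplications L(x) are nilpotent operators. -/
/-!
Since `{n,n}` is central and killed by the product on both sides, `V ⧸ {n,n}` inherits a
commutative associative product, and `L(x)` is nilpotent as soon as multiplication by the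
class of `x` is. In a finite-dimensional commutative associative algebra an element that is
not nilpotent yields a nonzero idempotent. But if `e·e ≡ e` modulo `{n,n}`, then
`{e,z} = -{e,e·z}` and `{e,e·z} = {e,e·(e·z)}`, which forces `{e,z} = 0` for all `z`; so `e`
is central, hence lies in `{n,n}`, and the quotient has no nonzero idempotent.
-/

namespace Module.End

variable {R M : Type*} [Ring R] [AddCommGroup M] [Module R M]

theorem isNilpotent_of_isNilpotent_mapQ {f : End R M} {p : Submodule R M}
    (hf : p ≤ LinearMap.ker f) (hp : p ≤ p.comap f) (h : IsNilpotent (p.mapQ p f hp)) :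
    IsNilpotent f := by
  obtain ⟨k, hk⟩ := h
  refine ⟨k + 1, LinearMap.ext fun z => ?_⟩
  have hz : (f ^ k) z ∈ p := by
    have := LinearMap.congr_fun hk (Submodule.Quotient.mk z)
    rwa [← Submodule.mapQ_pow p hp, Submodule.mapQ_apply, LinearMap.zero_apply,
      Submodule.Quotient.mk_eq_zero] at this
  rw [pow_succ', mul_apply, LinearMap.mem_ker.mp (hf hz), LinearMap.zero_apply]

end Module.End

section CommutativeAssociative

variable {K A : Type*} [CommRing K] [AddCommGroup A] [Module K A] {μ : A →ₗ[K] A →ₗ[K] A}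

theorem apply_pow_apply_of_assoc (hassoc : ∀ a b c, μ (μ a b) c = μ a (μ b c)) (a b : A)
    (k : ℕ) : μ ((μ a ^ k) b) = μ a ^ k * μ b := by
  induction k with
  | zero => rfl
  | succ k ih =>
    ext c
    rw [pow_succ', Module.End.mul_apply, Module.End.mul_apply, hassoc, ih]
    rfl

/-- The descending chain `a^k A` stabilises; writing `a^(k+1) = a^(2k+2) r`, the element
`a^(k+1) r` is idempotent, and it vanishes only if `a^(k+1) = 0`. -/
theorem isNilpotent_or_exists_idempotent_of_comm_assoc [IsArtinian K A]
    (hcomm : ∀ a b, μ a b = μ b a) (hassoc : ∀ a b c, μ (μ a b) c = μ a (μ b c)) (a : A) :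
    IsNilpotent (μ a) ∨ ∃ e ≠ 0, μ e e = e := by
  set T := μ a
  obtain ⟨k, hk⟩ := IsArtinian.monotone_stabilizes T.iterateRange
  set j := k + 1
  have hb : μ ((T ^ k) a) = T ^ j := by
    rw [apply_pow_apply_of_assoc hassoc, pow_succ]
  obtain ⟨r, hr⟩ : (T ^ k) a ∈ LinearMap.range (T ^ (j + j)) := by
    have hrange : LinearMap.range (T ^ k) = LinearMap.range (T ^ (j + j)) := hk _ (by omega)
    exact hrange ▸ LinearMap.mem_range_self _ _
  obtain ⟨e, he_def⟩ : ∃ e, e = (T ^ j) r := ⟨_, rfl⟩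
  have hTe : (T ^ j) e = (T ^ k) a := by rw [he_def, ← Module.End.mul_apply, ← pow_add, hr]
  by_cases he : e = 0
  · left
    refine ⟨j, ?_⟩
    rw [← hb, ← hTe, he, map_zero, map_zero]
  · right
    refine ⟨e, he, ?_⟩
    have hμe : μ e = T ^ j * μ r := by rw [he_def, apply_pow_apply_of_assoc hassoc]
    calc μ e e = (T ^ j) (μ r e) := by rw [hμe, Module.End.mul_apply]
      _ = (T ^ j) (μ e r) := by rw [hcomm]
      _ = μ ((T ^ j) e) r := by rw [apply_pow_apply_of_assoc hassoc, Module.End.mul_apply]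
      _ = e := by rw [hTe, hb, he_def]

end CommutativeAssociative

section LRStructure

variable {K V : Type*} [CommRing K] [AddCommGroup V] [Module K V]

structure IsLRStructure (n mul : V →ₗ[K] V →ₗ[K] V) : Prop where
  sub_swap : ∀ x y, mul x y - mul y x = n x y
  left_comm : ∀ x y z, mul x (mul y z) = mul y (mul x z)
  right_comm : ∀ x y z, mul (mul x y) z = mul (mul x z) y

def bracketSpan (n : V →ₗ[K] V →ₗ[K] V) : Submodule K V :=
  Submodule.span K {v | ∃ a b, v = n a b}

variable {n mul : V →ₗ[K] V →ₗ[K] V}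

theorem bracket_mem_bracketSpan (a b : V) : n a b ∈ bracketSpan n :=
  Submodule.subset_span ⟨a, b, rfl⟩

theorem apply_eq_zero_of_mem_bracketSpan {M : Type*} [AddCommGroup M] [Module K M]
    {f : V →ₗ[K] M} (hf : ∀ a b, f (n a b) = 0) {w : V} (hw : w ∈ bracketSpan n) : f w = 0 :=
  (Submodule.span_le (p := LinearMap.ker f)).mpr (by rintro _ ⟨a, b, rfl⟩; exact hf a b) hw

variable (mul) in
def quotientMul (p : Submodule K V) (hl : ∀ w ∈ p, ∀ z, mul w z ∈ p)
    (hr : ∀ w ∈ p, ∀ z, mul z w ∈ p) : (V ⧸ p) →ₗ[K] (V ⧸ p) →ₗ[K] (V ⧸ p) :=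
  (mul.compr₂ p.mkQ).liftQ₂ p p
    (fun w hw => LinearMap.ext fun z => (Submodule.Quotient.mk_eq_zero p).mpr (hl w hw z))
    (fun w hw => LinearMap.ext fun z => (Submodule.Quotient.mk_eq_zero p).mpr (hr w hw z))

@[simp]
theorem quotientMul_mk {p : Submodule K V} {hl hr} (a b : V) :
    quotientMul mul p hl hr (Submodule.Quotient.mk a) (Submodule.Quotient.mk b) =
      Submodule.Quotient.mk (mul a b) :=
  rfl

theorem isNilpotent_of_isNilpotent_quotientMul {p : Submodule K V} {hl hr}
    (hp : ∀ w ∈ p, ∀ z, mul z w = 0) (x : V)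
    (hx : IsNilpotent (quotientMul mul p hl hr (Submodule.Quotient.mk x))) :
    IsNilpotent (mul x) := by
  refine Module.End.isNilpotent_of_isNilpotent_mapQ (p := p) (fun w hw => hp w hw x)
    (fun w hw => hr w hw x) ?_
  convert hx using 1
  exact Submodule.linearMap_qext _ rfl

theorem mul_eq_zero_of_mem_bracketSpan (hcom : ∀ x y z, mul (n x y) z = 0) {w : V}
    (hw : w ∈ bracketSpan n) : mul w = 0 :=
  apply_eq_zero_of_mem_bracketSpan (fun a b => LinearMap.ext (hcom a b)) hw

namespace IsLRStructure

theorem quotientMul_comm (h : IsLRStructure n mul) {p : Submodule K V}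
    (hp : bracketSpan n ≤ p) {hl hr} (a b : V ⧸ p) :
    quotientMul mul p hl hr a b = quotientMul mul p hl hr b a := by
  induction a using Submodule.Quotient.induction_on
  induction b using Submodule.Quotient.induction_on
  rw [quotientMul_mk, quotientMul_mk, Submodule.Quotient.eq, h.sub_swap]
  exact hp (bracket_mem_bracketSpan _ _)

theorem quotientMul_assoc (h : IsLRStructure n mul) {p : Submodule K V}
    (hp : bracketSpan n ≤ p) {hl hr} (a b c : V ⧸ p) :
    quotientMul mul p hl hr (quotientMul mul p hl hr a b) c =
      quotientMul mul p hl hr a (quotientMul mul p hl hr b c) := by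
  induction a using Submodule.Quotient.induction_on
  induction b using Submodule.Quotient.induction_on
  induction c using Submodule.Quotient.induction_on
  simp only [quotientMul_mk]
  rw [Submodule.Quotient.eq, h.right_comm, h.left_comm, h.sub_swap]
  exact hp (bracket_mem_bracketSpan _ _)

theorem mul_bracket_eq_zero (h : IsLRStructure n mul) (hn2 : ∀ x y z, n (n x y) z = 0)
    (hcom : ∀ x y z, mul (n x y) z = 0) (x y z : V) : mul z (n x y) = 0 := by
  have := h.sub_swap (n x y) z
  rwa [hcom, hn2, zero_sub, neg_eq_zero] at this

theorem mul_apply_eq_zero_of_mem_bracketSpan (h : IsLRStructure n mul)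
    (hn2 : ∀ x y z, n (n x y) z = 0) (hcom : ∀ x y z, mul (n x y) z = 0) {w : V}
    (hw : w ∈ bracketSpan n) (z : V) : mul z w = 0 :=
  LinearMap.congr_fun (apply_eq_zero_of_mem_bracketSpan (f := mul.flip)
    (fun a b => LinearMap.ext (h.mul_bracket_eq_zero hn2 hcom a b)) hw) z

theorem bracket_mul_comm (h : IsLRStructure n mul) (hr : ∀ x y z, mul z (n x y) = 0)
    (y u z : V) : n (mul y u) z = n (mul y z) u := by
  rw [← h.sub_swap, ← h.sub_swap, h.right_comm y u z, h.left_comm z y u, h.left_comm u y z,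
    sub_right_inj, ← sub_eq_zero, ← map_sub, h.sub_swap, hr]

theorem bracket_eq_zero_of_mul_self_sub_mem [IsAddTorsionFree V] (h : IsLRStructure n mul)
    (hna : ∀ x, n x x = 0) (hn2 : ∀ x y z, n (n x y) z = 0)
    (hcom : ∀ x y z, mul (n x y) z = 0) {e : V} (he : mul e e - e ∈ bracketSpan n) (z : V) :
    n e z = 0 := by
  have hn : ∀ a b, n (n a b) = 0 := fun a b => LinearMap.ext (hn2 a b)
  have hmul : ∀ a b, mul (n a b) = 0 := fun a b => LinearMap.ext (hcom a b)
  have hee : ∀ f : V →ₗ[K] V →ₗ[K] V, (∀ a b, f (n a b) = 0) → f (mul e e) = f e :=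
    fun f hf => by rw [← sub_eq_zero, ← map_sub, apply_eq_zero_of_mem_bracketSpan hf he]
  have hswap : ∀ z, n e z = -n e (mul e z) := fun z =>
    calc n e z = n (mul e e) z := by rw [hee n hn]
      _ = n (mul e z) e := h.bracket_mul_comm (h.mul_bracket_eq_zero hn2 hcom) e e z
      _ = -n e (mul e z) := (LinearMap.IsAlt.neg hna _ _).symm
  have hstable : ∀ z, n e (mul e (mul e z)) = n e (mul e z) := fun z => by
    have hmem : mul e (mul e z) - mul e z ∈ bracketSpan n := by
      rw [show mul e (mul e z) - mul e z = -n (mul e z) e by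
        rw [← h.sub_swap, ← h.right_comm, hee mul hmul, neg_sub]]
      exact neg_mem (bracket_mem_bracketSpan _ _)
    rw [← sub_eq_zero, ← map_sub, LinearMap.IsAlt.eq_iff hna,
      apply_eq_zero_of_mem_bracketSpan hn hmem, LinearMap.zero_apply]
  have hzero : n e (mul e z) = 0 := by
    rw [← self_eq_neg]
    conv_lhs => rw [hswap, hstable]
  rw [hswap, hzero, neg_zero]

end IsLRStructure

end LRStructure

theorem stmt16_general {K V : Type*} [Field K] [CharZero K] [AddCommGroup V] [Module K V]
    [FiniteDimensional K V]
    (n : V →ₗ[K] V →ₗ[K] V)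
    (hna : ∀ x, n x x = 0)
    (hn2 : ∀ x y z, n (n x y) z = 0)
    (hz : ∀ x : V, (∀ y, n x y = 0) →
      x ∈ Submodule.span K {v : V | ∃ a b, v = n a b})
    (mul : V →ₗ[K] V →ₗ[K] V)
    (hlr1 : ∀ x y, mul x y - mul y x = n x y)
    (hlr2 : ∀ x y z, mul x (mul y z) = mul y (mul x z))
    (hlr3 : ∀ x y z, mul (mul x y) z = mul (mul x z) y)
    (hcom : ∀ x y z, mul (n x y) z = 0) :
    ∀ x : V, IsNilpotent (mul x : Module.End K V) := by
  have : IsAddTorsionFree V := .of_isTorsionFree K V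
  have h : IsLRStructure n mul := ⟨hlr1, hlr2, hlr3⟩
  have hl : ∀ w ∈ bracketSpan n, mul w = 0 := fun w hw => mul_eq_zero_of_mem_bracketSpan hcom hw
  have hr : ∀ w ∈ bracketSpan n, ∀ z, mul z w = 0 :=
    fun w hw => h.mul_apply_eq_zero_of_mem_bracketSpan hn2 hcom hw
  intro x
  rcases isNilpotent_or_exists_idempotent_of_comm_assoc
      (h.quotientMul_comm le_rfl (hl := fun w hw z => by simp [hl w hw])
        (hr := fun w hw z => by simp [hr w hw z]))
      (h.quotientMul_assoc le_rfl) (Submodule.Quotient.mk x) with hnil | ⟨e, he, hidem⟩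
  · exact isNilpotent_of_isNilpotent_quotientMul hr x hnil
  · obtain ⟨e, rfl⟩ := Submodule.Quotient.mk_surjective _ e
    rw [quotientMul_mk, Submodule.Quotient.eq] at hidem
    exact (he <| (Submodule.Quotient.mk_eq_zero _).mpr <|
      hz e (h.bracket_eq_zero_of_mul_self_sub_mem hna hn2 hcom hidem)).elim

/-- Let `n` be a finite-dimensional 2-step nilpotent Lie algebra with `Z(n) ⊆ {n,n}`,
and let `x·y` be an LR-structure on `n` with `{n,n}·n = 0`. Then all left
multiplications `L(x)` are nilpotent. -/
theorem stmt16 {K V : Type*} [Field K] [CharZero K] [AddCommGroup V] [Module K V]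
    [FiniteDimensional K V]
    (n : V →ₗ[K] V →ₗ[K] V)
    (hna : ∀ x, n x x = 0)
    (hnj : ∀ x y z, n (n x y) z + n (n y z) x + n (n z x) y = 0)
    (hn2 : ∀ x y z, n (n x y) z = 0)
    (hz : ∀ x : V, (∀ y, n x y = 0) →
      x ∈ Submodule.span K {v : V | ∃ a b, v = n a b})
    (mul : V →ₗ[K] V →ₗ[K] V)
    (hlr1 : ∀ x y, mul x y - mul y x = n x y)
    (hlr2 : ∀ x y z, mul x (mul y z) = mul y (mul x z))
    (hlr3 : ∀ x y z, mul (mul x y) z = mul (mul x z) y)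
    (hcom : ∀ x y z, mul (n x y) z = 0) :
    ∀ x : V, IsNilpotent (mul x : Module.End K V) :=
  stmt16_general n hna hn2 hz mul hlr1 hlr2 hlr3 hcom
end

section
/- Let n = (V,{,}) be a Lie algebra on a 3-dimensional vector space V over a field K of characteristic zero with basis (e1,e2,e3), defined by structure constants {e1,e2} = r1 e1 + r2 e2 + r3 e3, {e1,e3} = r4 e1 + r5 e2 + r6 e3, {e2,e3} = r7 e1 + r8 e2 + r9 e3. If n is isomorphic to the 3-dimensional Heisenberg Lie algebra, then (r6,r8,r9) = (−r2,−r4,r1) and the structure constant vector r = (r1,...,r9) is of one of the three types: (A) r = (r1, r2, r3, −r1 r2/r3, −r2²/r3, −r2, r1²/r3, r1 r2/r3, r1) with r3 ≠ 0; (B) r = (0,0,0, r4, r5, 0, −r4²/r5, −r4, 0) with r5 ≠ 0; (C) r = (0,0,0,0,0,0, r7, 0,0) with r7 ≠ 0. -/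
/-- If the 3-dimensional Lie algebra `n` with structure constants
`{e₁,e₂} = r₁e₁+r₂e₂+r₃e₃`, `{e₁,e₃} = r₄e₁+r₅e₂+r₆e₃`, `{e₂,e₃} = r₇e₁+r₈e₂+r₉e₃`
is isomorphic to the 3-dimensional Heisenberg Lie algebra, then
`(r₆,r₈,r₉) = (−r₂,−r₄,r₁)` and `r` is of type A, B or C. -/
theorem stmt18 {K : Type*} [Field K] [CharZero K]
    (r1 r2 r3 r4 r5 r6 r7 r8 r9 : K)
    (n h : (Fin 3 → K) →ₗ[K] (Fin 3 → K) →ₗ[K] (Fin 3 → K))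
    (e : Fin 3 → (Fin 3 → K)) (he : ∀ i, e i = Pi.single i 1)
    (hna : ∀ x, n x x = 0)
    (hn01 : n (e 0) (e 1) = r1 • e 0 + r2 • e 1 + r3 • e 2)
    (hn02 : n (e 0) (e 2) = r4 • e 0 + r5 • e 1 + r6 • e 2)
    (hn12 : n (e 1) (e 2) = r7 • e 0 + r8 • e 1 + r9 • e 2)
    (hha : ∀ x, h x x = 0)
    (hh01 : h (e 0) (e 1) = e 2)
    (hh02 : h (e 0) (e 2) = 0)
    (hh12 : h (e 1) (e 2) = 0)
    (φ : (Fin 3 → K) ≃ₗ[K] (Fin 3 → K))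
    (hφ : ∀ x y, φ (n x y) = h (φ x) (φ y)) :
    (r6 = -r2 ∧ r8 = -r4 ∧ r9 = r1) ∧
    ((r3 ≠ 0 ∧ r4 = -(r1 * r2) / r3 ∧ r5 = -(r2 ^ 2) / r3 ∧ r6 = -r2 ∧
        r7 = r1 ^ 2 / r3 ∧ r8 = r1 * r2 / r3 ∧ r9 = r1) ∨
     (r5 ≠ 0 ∧ r1 = 0 ∧ r2 = 0 ∧ r3 = 0 ∧ r6 = 0 ∧
        r7 = -(r4 ^ 2) / r5 ∧ r8 = -r4 ∧ r9 = 0) ∨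
     (r7 ≠ 0 ∧ r1 = 0 ∧ r2 = 0 ∧ r3 = 0 ∧ r4 = 0 ∧ r5 = 0 ∧ r6 = 0 ∧
        r8 = 0 ∧ r9 = 0)) := by
  -- skew-symmetry of n and h
  have nskew : ∀ x y, n x y = - n y x := by
    intro x y
    have h1 := hna (x + y)
    simp only [map_add, LinearMap.add_apply, hna x, hna y, zero_add, add_zero] at h1
    rw [add_comm] at h1
    exact eq_neg_of_add_eq_zero_left h1
  have hskew : ∀ x y, h x y = - h y x := by
    intro x y
    have h1 := hha (x + y)
    simp only [map_add, LinearMap.add_apply, hha x, hha y, zero_add, add_zero] at h1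
    rw [add_comm] at h1
    exact eq_neg_of_add_eq_zero_left h1
  -- basis expansion
  have hexp : ∀ v : Fin 3 → K, v = v 0 • e 0 + v 1 • e 1 + v 2 • e 2 := by
    intro v
    funext i
    fin_cases i <;> simp [he]
  -- h kills e 2 on the right
  have hcen : ∀ u, h u (e 2) = 0 := by
    intro u
    have hu := hexp u
    rw [hu]
    simp only [map_add, map_smul, LinearMap.add_apply, LinearMap.smul_apply,
      hh02, hh12, hha (e 2), smul_zero, add_zero]
  -- image of h is in span of e 2
  have himg : ∀ v w, ∃ c : K, h v w = c • e 2 := by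
    intro v w
    refine ⟨v 0 * w 1 - v 1 * w 0, ?_⟩
    have h10 : h (e 1) (e 0) = -(e 2) := by rw [hskew, hh01]
    have h20 : h (e 2) (e 0) = 0 := by rw [hskew, hh02, neg_zero]
    have h21 : h (e 2) (e 1) = 0 := by rw [hskew, hh12, neg_zero]
    conv_lhs => rw [hexp v, hexp w]
    simp only [map_add, map_smul, LinearMap.add_apply, LinearMap.smul_apply,
      hh01, hh02, hh12, h10, h20, h21, hha, smul_zero, smul_neg, add_zero, zero_add,
      smul_smul]
    module
  -- double brackets vanish
  have hnnn : ∀ x y z, n x (n y z) = 0 := by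
    intro x y z
    apply φ.injective
    obtain ⟨c, hc⟩ := himg (φ y) (φ z)
    rw [hφ, hφ, hc, map_smul, map_zero]
    rw [hcen, smul_zero]
  -- useful skew values
  have hn10 : n (e 1) (e 0) = -(r1 • e 0 + r2 • e 1 + r3 • e 2) := by rw [nskew, hn01]
  have hn20 : n (e 2) (e 0) = -(r4 • e 0 + r5 • e 1 + r6 • e 2) := by rw [nskew, hn02]
  have hn21 : n (e 2) (e 1) = -(r7 • e 0 + r8 • e 1 + r9 • e 2) := by rw [nskew, hn12]
  -- component extraction helper: rewrite e via single
  have he0 := he 0; have he1 := he 1; have he2 := he 2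
  -- E1 : n e0 (n e0 e1) = 0
  have E1 := hnnn (e 0) (e 0) (e 1)
  rw [hn01] at E1
  simp only [map_add, map_smul, hna, hn01, hn02, smul_zero, zero_add] at E1
  have eq1 : r2 * r1 + r3 * r4 = 0 := by
    have := congrFun E1 0; simpa [he, Pi.single_apply] using this
  have eq2 : r2 * r2 + r3 * r5 = 0 := by
    have := congrFun E1 1; simpa [he, Pi.single_apply] using this
  have eq3 : r2 * r3 + r3 * r6 = 0 := by
    have := congrFun E1 2; simpa [he, Pi.single_apply] using this
  -- E2 : n e1 (n e0 e1) = 0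
  have E2 := hnnn (e 1) (e 0) (e 1)
  rw [hn01] at E2
  simp only [map_add, map_smul, hna, hn10, hn12, smul_zero, smul_neg, add_zero] at E2
  have eq4 : -(r1 * r1) + r3 * r7 = 0 := by
    have := congrFun E2 0; simpa [he, Pi.single_apply] using this
  have eq5 : -(r1 * r2) + r3 * r8 = 0 := by
    have := congrFun E2 1; simpa [he, Pi.single_apply] using this
  have eq6 : -(r1 * r3) + r3 * r9 = 0 := by
    have := congrFun E2 2; simpa [he, Pi.single_apply] using this
  -- E4 : n e0 (n e0 e2) = 0
  have E4 := hnnn (e 0) (e 0) (e 2)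
  rw [hn02] at E4
  simp only [map_add, map_smul, hna, hn01, hn02, smul_zero, zero_add] at E4
  have eq10 : r5 * r1 + r6 * r4 = 0 := by
    have := congrFun E4 0; simpa [he, Pi.single_apply] using this
  have eq11 : r5 * r2 + r6 * r5 = 0 := by
    have := congrFun E4 1; simpa [he, Pi.single_apply] using this
  have eq12 : r5 * r3 + r6 * r6 = 0 := by
    have := congrFun E4 2; simpa [he, Pi.single_apply] using this
  -- E6 : n e2 (n e0 e2) = 0
  have E6 := hnnn (e 2) (e 0) (e 2)
  rw [hn02] at E6
  simp only [map_add, map_smul, hna, hn20, hn21, smul_zero, smul_neg, add_zero] at E6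
  have eq16 : -(r4 * r4) + -(r5 * r7) = 0 := by
    have := congrFun E6 0; simpa [he, Pi.single_apply] using this
  have eq17 : -(r4 * r5) + -(r5 * r8) = 0 := by
    have := congrFun E6 1; simpa [he, Pi.single_apply] using this
  -- E8 : n e1 (n e1 e2) = 0
  have E8 := hnnn (e 1) (e 1) (e 2)
  rw [hn12] at E8
  simp only [map_add, map_smul, hna, hn10, hn12, smul_zero, smul_neg, add_zero] at E8
  have eq22 : -(r7 * r1) + r9 * r7 = 0 := by
    have := congrFun E8 0; simpa [he, Pi.single_apply] using this
  have eq24 : -(r7 * r3) + r9 * r9 = 0 := by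
    have := congrFun E8 2; simpa [he, Pi.single_apply] using this
  -- E9 : n e2 (n e1 e2) = 0
  have E9 := hnnn (e 2) (e 1) (e 2)
  rw [hn12] at E9
  simp only [map_add, map_smul, hna, hn20, hn21, smul_zero, smul_neg, add_zero] at E9
  have eq26 : -(r7 * r5) + -(r8 * r8) = 0 := by
    have := congrFun E9 1; simpa [he, Pi.single_apply] using this
  -- nontriviality
  have hne : ¬ (n (e 0) (e 1) = 0 ∧ n (e 0) (e 2) = 0 ∧ n (e 1) (e 2) = 0) := by
    rintro ⟨hA, hB, hC⟩
    have hA' : n (e 1) (e 0) = 0 := by rw [nskew, hA, neg_zero]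
    have hB' : n (e 2) (e 0) = 0 := by rw [nskew, hB, neg_zero]
    have hC' : n (e 2) (e 1) = 0 := by rw [nskew, hC, neg_zero]
    have key : n (φ.symm (e 0)) (φ.symm (e 1)) = φ.symm (e 2) := by
      apply φ.injective
      rw [hφ]
      simp [hh01]
    rw [hexp (φ.symm (e 0)), hexp (φ.symm (e 1))] at key
    simp only [map_add, map_smul, LinearMap.add_apply, LinearMap.smul_apply,
      hna, hA, hB, hC, hA', hB', hC', smul_zero, add_zero, zero_add] at key
    have h2 : e 2 = (0 : Fin 3 → K) := by
      have : φ.symm (e 2) = φ.symm 0 := by rw [map_zero]; exact key.symm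
      exact φ.symm.injective this
    have := congrFun h2 2
    simp [he] at this
  -- case analysis
  by_cases h3 : r3 = 0
  · -- r3 = 0
    subst h3
    have h2z : r2 = 0 := mul_self_eq_zero.mp (by linear_combination eq2)
    have h1z : r1 = 0 := mul_self_eq_zero.mp (by linear_combination -eq4)
    have h6z : r6 = 0 := mul_self_eq_zero.mp (by linear_combination eq12)
    have h9z : r9 = 0 := mul_self_eq_zero.mp (by linear_combination eq24)
    by_cases h5 : r5 = 0
    · -- type C
      subst h5
      have h8z : r8 = 0 := mul_self_eq_zero.mp (by linear_combination -eq26)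
      have h4z : r4 = 0 := mul_self_eq_zero.mp (by linear_combination -eq16)
      have h7 : r7 ≠ 0 := by
        intro h7z
        apply hne
        refine ⟨?_, ?_, ?_⟩ <;>
          simp [hn01, hn02, hn12, h1z, h2z, h4z, h6z, h7z, h8z, h9z]
      refine ⟨⟨by rw [h6z, h2z, neg_zero], by rw [h8z, h4z, neg_zero], by rw [h9z, h1z]⟩, ?_⟩
      exact Or.inr (Or.inr ⟨h7, h1z, h2z, rfl, h4z, rfl, h6z, h8z, h9z⟩)
    · -- type B
      have h8 : r8 = -r4 := by
        apply mul_left_cancel₀ h5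
        linear_combination -eq17
      have h7 : r7 = -(r4 ^ 2) / r5 := by
        rw [eq_div_iff h5]
        linear_combination -eq16
      refine ⟨⟨by rw [h6z, h2z, neg_zero], h8, by rw [h9z, h1z]⟩, ?_⟩
      exact Or.inr (Or.inl ⟨h5, h1z, h2z, rfl, h6z, h7, h8, h9z⟩)
  · -- type A, r3 ≠ 0
    have h6 : r6 = -r2 := by
      apply mul_left_cancel₀ h3
      linear_combination eq3
    have h9 : r9 = r1 := by
      apply mul_left_cancel₀ h3
      linear_combination eq6
    have h4 : r4 = -(r1 * r2) / r3 := by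
      rw [eq_div_iff h3]
      linear_combination eq1
    have h8 : r8 = r1 * r2 / r3 := by
      rw [eq_div_iff h3]
      linear_combination eq5
    have h5 : r5 = -(r2 ^ 2) / r3 := by
      rw [eq_div_iff h3]
      linear_combination eq2
    have h7 : r7 = r1 ^ 2 / r3 := by
      rw [eq_div_iff h3]
      linear_combination eq4
    refine ⟨⟨h6, by rw [h8, h4, neg_div, neg_neg], h9⟩, ?_⟩
    exact Or.inl ⟨h3, h4, h5, h6, h7, h8, h9⟩
end
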